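/- arXiv:2512.21971 — 7 statements merged into one kernel-verified Lean document; each statement's English description precedes it below -/
import Mathlib

section
/- Let H be a cocommutative Hopf algebroid over R (in Lu's sense) such that ι(R) is contained in the center of H. Then the antipode S is R-linear, i.e. S(ι(f)x) = ι(f)S(x) for all f ∈ R and x ∈ H, and ε ∘ S = ε; consequently H is a Hopf R-algebra, i.e. all its structure maps are R-linear. -/
open scoped TensorProduct

/-!
Lu's definition of a Hopf algebroid with commutative base algebra `R`: a unital
`k`-algebra `H` with an algebra homomorphism `ι : R → H` making `H` a left `R`-module
via `f • x = ι(f)x`, an `R`-linear coassociative coproduct `Δ : H → H ⊗_R H` (handled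
via a chosen Sweedler representation `Δ(x) = ∑ c1 x i ⊗ c2 x i`) satisfying
`Δ(x)(ι(f) ⊗ 1 − 1 ⊗ ι(f)) = 0` and multiplicativity, an `R`-linear counit `ε` whose
kernel is a left ideal and with `ι(ε(x₁))x₂ = x = ι(ε(x₂))x₁`, and an algebra
anti-isomorphism `S` with `S ∘ ι = ι`, `m(S ⊗ id)Δ = ι∘ε∘S` and `m(id ⊗ S)Δ = ι∘ε`.
-/

structure LuHopfAlgebroid (k R H : Type*) [Field k] [CharZero k] [CommRing R]
    [Algebra k R] [Ring H] [Algebra k H] [Module R H] where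
  /-- the source (= target) map -/
  iota : R →ₐ[k] H
  /-- `H` is a left `R`-module via `ι` -/
  smul_def : ∀ (f : R) (x : H), f • x = iota f * x
  /-- size of the chosen Sweedler representation of the coproduct -/
  n : H → ℕ
  /-- first Sweedler components of the coproduct -/
  c1 : H → ℕ → H
  /-- second Sweedler components of the coproduct -/
  c2 : H → ℕ → H
  /-- the coproduct, an `R`-linear map `H → H ⊗_R H` -/
  comul : H →ₗ[R] H ⊗[R] H
  repr : ∀ x : H, comul x = ∑ i ∈ Finset.range (n x), c1 x i ⊗ₜ[R] c2 x i
  /-- coassociativity of the coproduct -/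
  comul_coassoc : ∀ x : H,
      ∑ i ∈ Finset.range (n x), ∑ j ∈ Finset.range (n (c1 x i)),
        c1 (c1 x i) j ⊗ₜ[R] (c2 (c1 x i) j ⊗ₜ[R] c2 x i)
    = ∑ i ∈ Finset.range (n x), ∑ j ∈ Finset.range (n (c2 x i)),
        c1 x i ⊗ₜ[R] (c1 (c2 x i) j ⊗ₜ[R] c2 (c2 x i) j)
  /-- `Δ(x)(ι(f) ⊗ 1 − 1 ⊗ ι(f)) = 0` -/
  comul_balanced : ∀ (f : R) (x : H),
      ∑ i ∈ Finset.range (n x), (c1 x i * iota f) ⊗ₜ[R] c2 x i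
    = ∑ i ∈ Finset.range (n x), c1 x i ⊗ₜ[R] (c2 x i * iota f)
  /-- `Δ` is an algebra homomorphism onto its image -/
  comul_mul : ∀ x y : H, comul (x * y)
    = ∑ i ∈ Finset.range (n x), ∑ j ∈ Finset.range (n y),
        (c1 x i * c1 y j) ⊗ₜ[R] (c2 x i * c2 y j)
  comul_one : comul 1 = 1 ⊗ₜ[R] 1
  /-- the counit, an `R`-linear map `H → R` -/
  counit : H →ₗ[R] R
  counit_one : counit 1 = 1
  /-- the kernel of `ε` is a left ideal -/
  counit_ker : ∀ x y : H, counit (x * (y - iota (counit y))) = 0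
  /-- `ι(ε(x₁))x₂ = x` -/
  counit_left : ∀ x : H, ∑ i ∈ Finset.range (n x), counit (c1 x i) • c2 x i = x
  /-- `ι(ε(x₂))x₁ = x` -/
  counit_right : ∀ x : H, ∑ i ∈ Finset.range (n x), counit (c2 x i) • c1 x i = x
  /-- the antipode -/
  S : H → H
  S_add : ∀ x y : H, S (x + y) = S x + S y
  S_smulk : ∀ (a : k) (x : H), S (a • x) = a • S x
  S_bij : Function.Bijective S
  S_one : S 1 = 1
  /-- `S` is an algebra anti-isomorphism -/
  S_antimul : ∀ x y : H, S (x * y) = S y * S x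
  /-- `S ∘ ι = ι` -/
  S_iota : ∀ f : R, S (iota f) = iota f
  /-- `m(S ⊗ id)Δ = ι∘ε∘S` -/
  S_antipode_left : ∀ x : H,
    ∑ i ∈ Finset.range (n x), S (c1 x i) * c2 x i = iota (counit (S x))
  /-- `m(id ⊗ S)Δ = ι∘ε` -/
  S_antipode_right : ∀ x : H,
    ∑ i ∈ Finset.range (n x), c1 x i * S (c2 x i) = iota (counit x)

/-!
Centrality of `ι(R)` makes `S` commute with `ι(f)·` and makes `ε` multiplicative, so
`ε ∘ S` is an `R`-linear functional. Applying `ε` to the two antipode axioms gives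
`ε(S x) = ε(S x₁) ε(x₂)` and `ε(x) = ε(x₁) ε(S x₂)`; these are the images of `Δ(x)` and of
its flip under the same `R`-bilinear pairing, so cocommutativity makes them equal.
-/

namespace LuHopfAlgebroid

variable {k R H : Type*} [Field k] [CharZero k] [CommRing R] [Algebra k R] [Ring H]
  [Algebra k H] [Module R H] (L : LuHopfAlgebroid k R H)

theorem counit_iota (f : R) : L.counit (L.iota f) = f := by
  rw [← mul_one (L.iota f), ← L.smul_def, map_smul, L.counit_one, smul_eq_mul, mul_one]

section Central

variable {L} (hcentral : ∀ (f : R) (x : H), L.iota f * x = x * L.iota f)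
include hcentral

theorem S_iota_mul (f : R) (x : H) : L.S (L.iota f * x) = L.iota f * L.S x := by
  rw [L.S_antimul, L.S_iota, hcentral]

theorem counit_mul (x y : H) : L.counit (x * y) = L.counit x * L.counit y := by
  have h := L.counit_ker x y
  rwa [mul_sub, ← hcentral, ← L.smul_def, map_sub, map_smul, smul_eq_mul, sub_eq_zero,
    mul_comm] at h

def counitS : H →ₗ[R] R where
  toFun x := L.counit (L.S x)
  map_add' x y := by rw [L.S_add, map_add]
  map_smul' f x := by
    rw [L.smul_def, S_iota_mul hcentral, ← L.smul_def, map_smul, RingHom.id_apply]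

theorem counit_S_eq_sum (x : H) :
    L.counit (L.S x) = ∑ i ∈ Finset.range (L.n x),
      L.counit (L.S (L.c1 x i)) * L.counit (L.c2 x i) := by
  have h := congrArg L.counit (L.S_antipode_left x)
  rw [counit_iota, map_sum] at h
  simp only [counit_mul hcentral] at h
  exact h.symm

theorem counit_eq_sum (x : H) :
    L.counit x = ∑ i ∈ Finset.range (L.n x),
      L.counit (L.c1 x i) * L.counit (L.S (L.c2 x i)) := by
  have h := congrArg L.counit (L.S_antipode_right x)
  rw [counit_iota, map_sum] at h
  simp only [counit_mul hcentral] at h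
  exact h.symm

end Central

theorem sum_bilinear_swap_of_cocomm {M : Type*} [AddCommGroup M] [Module R M]
    (hcc : ∀ x : H, (TensorProduct.comm R H H) (L.comul x) = L.comul x)
    (B : H →ₗ[R] H →ₗ[R] M) (x : H) :
    ∑ i ∈ Finset.range (L.n x), B (L.c2 x i) (L.c1 x i)
      = ∑ i ∈ Finset.range (L.n x), B (L.c1 x i) (L.c2 x i) := by
  have h := congrArg (TensorProduct.lift B) (hcc x)
  simpa only [L.repr, map_sum, TensorProduct.comm_tmul, TensorProduct.lift.tmul] using h

end LuHopfAlgebroid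

/-- if `H` is a cocommutative Hopf algebroid over `R` (in Lu's sense) such
that `ι(R)` is contained in the center of `H`, then the antipode is `R`-linear,
`ε ∘ S = ε`, and consequently `H` is a Hopf `R`-algebra. -/
theorem stmt0 {k R H : Type*} [Field k] [CharZero k] [CommRing R]
    [Algebra k R] [Ring H] [Algebra k H] [Module R H]
    (L : LuHopfAlgebroid k R H)
    -- `H` is cocommutative
    (hcc : ∀ x : H, (TensorProduct.comm R H H) (L.comul x) = L.comul x)
    -- `ι(R)` lies in the center of `H`
    (hcentral : ∀ (f : R) (x : H), L.iota f * x = x * L.iota f) :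
    -- `S` is `R`-linear, i.e. `S(ι(f)x) = ι(f)S(x)`
    (∀ (f : R) (x : H), L.S (L.iota f * x) = L.iota f * L.S x)
    -- and `ε ∘ S = ε`
    ∧ (∀ x : H, L.counit (L.S x) = L.counit x) := by
  refine ⟨LuHopfAlgebroid.S_iota_mul hcentral, fun x => ?_⟩
  have hswap := L.sum_bilinear_swap_of_cocomm hcc
    ((LinearMap.mul R R).compl₁₂ (LuHopfAlgebroid.counitS hcentral) L.counit) x
  simp only [LinearMap.compl₁₂_apply, LinearMap.mul_apply', LuHopfAlgebroid.counitS,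
    LinearMap.coe_mk, AddHom.coe_mk] at hswap
  rw [LuHopfAlgebroid.counit_S_eq_sum hcentral, LuHopfAlgebroid.counit_eq_sum hcentral,
    ← hswap]
  exact Finset.sum_congr rfl fun i _ => mul_comm _ _
end

section
/- In any weak post-Hopf algebroid (H, ι, ▷) over R, the Grossman–Larson product x *_▷ y := x₁(x₂ ▷ y) is a well-defined binary operation on H that is associative with unit 1_H, and ι is an algebra homomorphism from R to (H, *_▷) satisfying ι(f) *_▷ x = f·x for all f ∈ R, x ∈ H. -/
/-!
A cocommutative Hopf `R`-algebra is encoded via Mathlib's `HopfAlgebra R H` (so `ι` is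
`algebraMap R H`, whose image is central) together with a cocommutativity axiom. The
comultiplication is handled through a chosen Sweedler representation `comul x = ∑ c1 x i ⊗ c2 x i`.

The product `x *_▷ y` is the image of `Δx` under the `R`-linear map `a ⊗ b ↦ a (b ▷ y)`, so it
does not depend on the Sweedler representation. Cocommutativity makes `Δ` a coalgebra map, i.e.
`x₁ ⊗ x₃ ⊗ x₂ ⊗ x₄ = x₁ ⊗ x₂ ⊗ x₃ ⊗ x₄`; with axioms (1) and (6) this gives
`Δ(x *_▷ y) = (x₁ *_▷ y₁) ⊗ (x₂ *_▷ y₂)`. Axiom (7) reads `(x *_▷ y) ▷ z = x ▷ (y ▷ z)`, and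
coassociativity with axiom (6) gives `x *_▷ (u w) = (x₁ *_▷ u)(x₂ ▷ w)`. Hence
`(x *_▷ y) *_▷ z = (x₁ *_▷ y₁)(x₂ ▷ (y₂ ▷ z)) = x *_▷ (y₁ (y₂ ▷ z)) = x *_▷ (y *_▷ z)`.
-/

open scoped TensorProduct

/-- A weak post-Hopf algebroid over `R`: a cocommutative Hopf `R`-algebra `(H, ι)` together
with a `k`-bilinear map `▷ : H × H → H` satisfying axioms (1)–(7). -/
structure WeakPostHopfAlgebroid (k R H : Type*) [Field k] [CharZero k]
    [CommRing R] [Algebra k R] [Ring H] [HopfAlgebra R H]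
    [Algebra k H] [IsScalarTower k R H] where
  /-- the post-Hopf product `▷` -/
  tr : H → H → H
  /-- size of the chosen Sweedler representation of `comul x` -/
  n : H → ℕ
  /-- first Sweedler components -/
  c1 : H → ℕ → H
  /-- second Sweedler components -/
  c2 : H → ℕ → H
  repr : ∀ x : H, Coalgebra.comul (R := R) x
      = ∑ i ∈ Finset.range (n x), c1 x i ⊗ₜ[R] c2 x i
  cocomm : ∀ x : H, (TensorProduct.comm R H H) (Coalgebra.comul (R := R) x)
      = Coalgebra.comul (R := R) x
  tr_add_left : ∀ x y z : H, tr (x + y) z = tr x z + tr y z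
  tr_add_right : ∀ x y z : H, tr x (y + z) = tr x y + tr x z
  tr_smul_right : ∀ (a : k) (x y : H), tr x (a • y) = a • tr x y
  /-- axiom (1): `Δ(x ▷ y) = (x₁ ▷ y₁) ⊗ (x₂ ▷ y₂)` -/
  comul_tr : ∀ x y : H, Coalgebra.comul (R := R) (tr x y)
      = ∑ i ∈ Finset.range (n x), ∑ j ∈ Finset.range (n y),
          tr (c1 x i) (c1 y j) ⊗ₜ[R] tr (c2 x i) (c2 y j)
  /-- axiom (2): `x ▷ 1 = ι(ε(x))` -/
  tr_one : ∀ x : H, tr x 1 = algebraMap R H (Coalgebra.counit (R := R) x)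
  /-- axiom (3): `1 ▷ x = x` -/
  one_tr : ∀ x : H, tr 1 x = x
  /-- axiom (4): `ι(ε(x ▷ y)) = x ▷ ι(ε(y))` -/
  counit_tr : ∀ x y : H, algebraMap R H (Coalgebra.counit (R := R) (tr x y))
      = tr x (algebraMap R H (Coalgebra.counit (R := R) y))
  /-- axiom (5): `(f·x) ▷ y = f·(x ▷ y)` -/
  tr_smul_left : ∀ (f : R) (x y : H), tr (f • x) y = f • tr x y
  /-- axiom (6): `x ▷ (yz) = (x₁ ▷ y)(x₂ ▷ z)` -/
  tr_mul : ∀ x y z : H, tr x (y * z)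
      = ∑ i ∈ Finset.range (n x), tr (c1 x i) y * tr (c2 x i) z
  /-- axiom (7): `x ▷ (y ▷ z) = (x₁(x₂ ▷ y)) ▷ z` -/
  tr_tr : ∀ x y z : H, tr x (tr y z)
      = tr (∑ i ∈ Finset.range (n x), c1 x i * tr (c2 x i) y) z

/-- The Grossman–Larson product `x *_▷ y := x₁(x₂ ▷ y)` (computed with the chosen
Sweedler representation). -/
def WeakPostHopfAlgebroid.gl {k R H : Type*} [Field k] [CharZero k]
    [CommRing R] [Algebra k R] [Ring H] [HopfAlgebra R H]
    [Algebra k H] [IsScalarTower k R H]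
    (W : WeakPostHopfAlgebroid k R H) (x y : H) : H :=
  ∑ i ∈ Finset.range (W.n x), W.c1 x i * W.tr (W.c2 x i) y

open TensorProduct

theorem TensorProduct.mul_map_eq_map_mul'_lTensor {R A M N : Type*} [CommSemiring R] [Semiring A]
    [Algebra R A] [AddCommMonoid M] [Module R M] [AddCommMonoid N] [Module R N]
    (f : M →ₗ[R] A) (g : N →ₗ[R] A) (s : A ⊗[R] A) (t : M ⊗[R] N) :
    s * map f g t = map (LinearMap.mul' R A ∘ₗ LinearMap.lTensor A f)
      (LinearMap.mul' R A ∘ₗ LinearMap.lTensor A g)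
      (tensorTensorTensorComm R A A M N (s ⊗ₜ t)) := by
  induction s using TensorProduct.induction_on with
  | zero => simp
  | tmul a b =>
    induction t using TensorProduct.induction_on with
    | zero => simp
    | tmul m n => simp
    | add t t' ht ht' => simp [mul_add, ht, ht', tmul_add]
  | add s s' hs hs' => simp [add_mul, hs, hs', add_tmul]

theorem Coalgebra.tensorTensorTensorComm_map_comul_comul_comul {R C : Type*} [CommSemiring R]
    [AddCommMonoid C] [Module R C] [Coalgebra R C] [Coalgebra.IsCocomm R C] (x : C) :
    tensorTensorTensorComm R C C C C (map comul comul (comul x)) =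
      map comul comul (comul (R := R) x) :=
  (CoalgHomClass.map_comp_comul_apply (Coalgebra.comulCoalgHom R C) x).symm

namespace WeakPostHopfAlgebroid

open Finset

variable {k R H : Type*} [Field k] [CharZero k] [CommRing R] [Algebra k R] [Ring H]
  [HopfAlgebra R H] [Algebra k H] [IsScalarTower k R H]

theorem isCocomm (W : WeakPostHopfAlgebroid k R H) : Coalgebra.IsCocomm R H :=
  ⟨LinearMap.ext W.cocomm⟩

variable (W : WeakPostHopfAlgebroid k R H)

def trLeft (y : H) : H →ₗ[R] H where
  toFun u := W.tr u y
  map_add' u v := W.tr_add_left u v y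
  map_smul' f u := W.tr_smul_left f u y

noncomputable def glLin (y : H) : H ⊗[R] H →ₗ[R] H :=
  LinearMap.mul' R H ∘ₗ LinearMap.lTensor H (W.trLeft y)

@[simp] lemma glLin_tmul (y a b : H) : W.glLin y (a ⊗ₜ b) = a * W.tr b y := rfl

def comulRepr (x : H) : Coalgebra.Repr R x ℕ where
  index := range (W.n x)
  left := W.c1 x
  right := W.c2 x
  eq := (W.repr x).symm

lemma gl_eq_glLin_comul (x y : H) : W.gl x y = W.glLin y (Coalgebra.comul x) := by
  simp [W.repr x, gl]

lemma sum_mul_tr_eq_gl {ι : Type*} (s : Finset ι) (a b : ι → H) {x : H}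
    (hx : Coalgebra.comul (R := R) x = ∑ i ∈ s, a i ⊗ₜ b i) (y : H) :
    ∑ i ∈ s, a i * W.tr (b i) y = W.gl x y := by
  simp [gl_eq_glLin_comul, hx]

lemma tr_sum_right {ι : Type*} (x : H) (s : Finset ι) (y : ι → H) :
    W.tr x (∑ j ∈ s, y j) = ∑ j ∈ s, W.tr x (y j) :=
  map_sum (AddMonoidHom.mk' (W.tr x) (W.tr_add_right x)) y s

lemma gl_sum_right {ι : Type*} (x : H) (s : Finset ι) (y : ι → H) :
    W.gl x (∑ j ∈ s, y j) = ∑ j ∈ s, W.gl x (y j) := by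
  simp only [gl, tr_sum_right, mul_sum]
  exact sum_comm

lemma tr_gl (x y z : H) : W.tr (W.gl x y) z = W.tr x (W.tr y z) := (W.tr_tr x y z).symm

lemma comul_tr_eq_sum_map (x y : H) :
    Coalgebra.comul (R := R) (W.tr x y) =
      ∑ j ∈ range (W.n y),
        map (W.trLeft (W.c1 y j)) (W.trLeft (W.c2 y j)) (Coalgebra.comul x) := by
  simp only [W.comul_tr, W.repr x, map_sum, map_tmul]
  exact sum_comm

lemma comul_gl (x y : H) :
    Coalgebra.comul (R := R) (W.gl x y) = ∑ i ∈ range (W.n x), ∑ j ∈ range (W.n y),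
      W.gl (W.c1 x i) (W.c1 y j) ⊗ₜ W.gl (W.c2 x i) (W.c2 y j) := by
  have := W.isCocomm
  calc Coalgebra.comul (R := R) (W.gl x y)
      = ∑ i ∈ range (W.n x), ∑ j ∈ range (W.n y), Coalgebra.comul (W.c1 x i) *
          map (W.trLeft (W.c1 y j)) (W.trLeft (W.c2 y j)) (Coalgebra.comul (W.c2 x i)) := by
        simp only [gl, map_sum, Bialgebra.comul_mul, comul_tr_eq_sum_map, mul_sum]
    _ = ∑ j ∈ range (W.n y), map (W.glLin (W.c1 y j)) (W.glLin (W.c2 y j))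
          (tensorTensorTensorComm R H H H H
            (map Coalgebra.comul Coalgebra.comul (Coalgebra.comul x))) := by
        rw [sum_comm]
        simp only [W.repr x, map_sum, map_tmul, mul_map_eq_map_mul'_lTensor, glLin]
    _ = ∑ j ∈ range (W.n y), map (W.glLin (W.c1 y j)) (W.glLin (W.c2 y j))
          (map Coalgebra.comul Coalgebra.comul (Coalgebra.comul x)) := by
        rw [Coalgebra.tensorTensorTensorComm_map_comul_comul_comul]
    _ = _ := by
        rw [sum_comm]
        simp only [W.repr x, map_sum, map_tmul, ← gl_eq_glLin_comul]

lemma gl_mul (x u w : H) :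
    W.gl x (u * w) = ∑ i ∈ range (W.n x), W.gl (W.c1 x i) u * W.tr (W.c2 x i) w := by
  have h := congrArg (LinearMap.mul' R H ∘ₗ LinearMap.lTensor H
      (LinearMap.mul' R H ∘ₗ map (W.trLeft u) (W.trLeft w)))
    (Coalgebra.sum_tmul_tmul_eq (W.comulRepr x) (fun i => W.comulRepr (W.c1 x i))
      (fun i => W.comulRepr (W.c2 x i)))
  simp only [map_sum, LinearMap.comp_apply, LinearMap.lTensor_tmul, map_tmul,
    LinearMap.mul'_apply] at h
  simp only [gl, W.tr_mul, sum_mul, mul_sum, mul_assoc]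
  exact h.symm

lemma gl_assoc (x y z : H) : W.gl (W.gl x y) z = W.gl x (W.gl y z) := by
  calc W.gl (W.gl x y) z
      = ∑ i ∈ range (W.n x), ∑ j ∈ range (W.n y),
          W.gl (W.c1 x i) (W.c1 y j) * W.tr (W.gl (W.c2 x i) (W.c2 y j)) z := by
        simp [gl_eq_glLin_comul (x := W.gl x y), comul_gl]
    _ = ∑ j ∈ range (W.n y), W.gl x (W.c1 y j * W.tr (W.c2 y j) z) := by
        simp only [gl_mul, tr_gl]
        exact sum_comm
    _ = W.gl x (W.gl y z) := by rw [← gl_sum_right]; rfl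

lemma gl_one_left (x : H) : W.gl 1 x = x := by
  rw [gl_eq_glLin_comul, Bialgebra.comul_one, Algebra.TensorProduct.one_def, glLin_tmul, W.one_tr,
    one_mul]

lemma gl_one_right (x : H) : W.gl x 1 = x := by
  have h := congrArg (TensorProduct.rid R H) (Coalgebra.sum_tmul_counit_eq (W.comulRepr x))
  simp only [map_sum, rid_tmul, one_smul] at h
  simp only [gl, W.tr_one, ← Algebra.commutes, ← Algebra.smul_def]
  exact h

lemma gl_algebraMap_left (f : R) (x : H) : W.gl (algebraMap R H f) x = f • x := by
  rw [gl_eq_glLin_comul, Bialgebra.comul_algebraMap, Algebra.TensorProduct.algebraMap_apply,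
    glLin_tmul, W.one_tr, ← Algebra.smul_def]

lemma gl_algebraMap (f g : R) :
    W.gl (algebraMap R H f) (algebraMap R H g) = algebraMap R H (f * g) := by
  rw [gl_algebraMap_left, Algebra.smul_def, map_mul]

end WeakPostHopfAlgebroid

/-- the Grossman–Larson product is well defined (independent of the chosen
representation of the coproduct), associative with unit `1`, and `ι` is an algebra
homomorphism from `R` to `(H, *_▷)` with `ι(f) *_▷ x = f·x`. -/
theorem stmt3 {k R H : Type*} [Field k] [CharZero k]
    [CommRing R] [Algebra k R] [Ring H] [HopfAlgebra R H]
    [Algebra k H] [IsScalarTower k R H]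
    (W : WeakPostHopfAlgebroid k R H) :
    (∀ (x y : H) (m : ℕ) (a b : ℕ → H),
        Coalgebra.comul (R := R) x = ∑ i ∈ Finset.range m, a i ⊗ₜ[R] b i →
        ∑ i ∈ Finset.range m, a i * W.tr (b i) y = W.gl x y)
    ∧ (∀ x y z : H, W.gl (W.gl x y) z = W.gl x (W.gl y z))
    ∧ (∀ x : H, W.gl 1 x = x)
    ∧ (∀ x : H, W.gl x 1 = x)
    ∧ W.gl 1 1 = 1
    ∧ (∀ f g : R, W.gl (algebraMap R H f) (algebraMap R H g) = algebraMap R H (f * g))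
    ∧ (∀ (f : R) (x : H), W.gl (algebraMap R H f) x = f • x) :=
  ⟨fun _ y m a b hx => W.sum_mul_tr_eq_gl (Finset.range m) a b hx y, W.gl_assoc, W.gl_one_left,
    W.gl_one_right, W.gl_one_left 1, W.gl_algebraMap, W.gl_algebraMap_left⟩
end

section
/- In any weak post-Hopf algebroid (H, ι, ▷) over R, the Grossman–Larson product satisfies, for all f ∈ R and x, y ∈ H: Δ(x *_▷ y) = (x₁ *_▷ y₁) ⊗_R (x₂ *_▷ y₂); (x₁ *_▷ ι(f)) ⊗_R x₂ = x₁ ⊗_R (x₂ *_▷ ι(f)); ι(ε(x₁)) *_▷ x₂ = x; and ε(x *_▷ ι(ε(y))) = ε(x *_▷ y). Consequently H_▷ = (H, *_▷, Δ, ε, ι) is a bialgebroid over R (the Grossman–Larson bialgebroid). -/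
/-!
STATEMENT 2: In any weak post-Hopf algebroid `(H, ι, ▷)` over `R`, for all `f ∈ R` and
`x ∈ H` one has `x ▷ ι(f) = ι(ε(x ▷ ι(f)))` and `ι(f) ▷ x = f·x`.

A cocommutative Hopf `R`-algebra is encoded via Mathlib's `HopfAlgebra R H` (so `ι` is
`algebraMap R H`, whose image is central) together with a cocommutativity axiom.  The
comultiplication is handled through a chosen Sweedler representation `comul x = ∑ c1 x i ⊗ c2 x i`.
-/

open scoped TensorProduct

namespace WeakPostHopfAlgebroid

open TensorProduct LinearMap

variable {k R H : Type*} [Field k] [CharZero k]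
    [CommRing R] [Algebra k R] [Ring H] [HopfAlgebra R H]
    [Algebra k H] [IsScalarTower k R H] (W : WeakPostHopfAlgebroid k R H)

/-- `b ↦ b ▷ y` as an `R`-linear map. -/
noncomputable def trL (y : H) : H →ₗ[R] H where
  toFun b := W.tr b y
  map_add' a b := W.tr_add_left a b y
  map_smul' f a := W.tr_smul_left f a y

@[simp] lemma trL_apply (y b : H) : W.trL y b = W.tr b y := rfl

/-- `a ⊗ b ↦ a * (b ▷ y)` as an `R`-linear map. -/
noncomputable def M (y : H) : H ⊗[R] H →ₗ[R] H :=
  LinearMap.mul' R H ∘ₗ (W.trL y).lTensor H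

@[simp] lemma M_tmul (y a b : H) : W.M y (a ⊗ₜ[R] b) = a * W.tr b y := by
  simp [M, LinearMap.mul'_apply]

lemma gl_eq (x y : H) : W.gl x y = W.M y (Coalgebra.comul (R := R) x) := by
  rw [gl, W.repr x, map_sum]; simp

lemma comm_comul (W : WeakPostHopfAlgebroid k R H) :
    (TensorProduct.comm R H H).toLinearMap ∘ₗ
      (Coalgebra.comul : H →ₗ[R] H ⊗[R] H) = Coalgebra.comul :=
  LinearMap.ext W.cocomm

section KeyLemma

variable (R H)

private lemma P1aux :
    (Coalgebra.comul : H →ₗ[R] H ⊗[R] H).rTensor (H ⊗[R] H) ∘ₗ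
        (TensorProduct.assoc R H H H).toLinearMap
      = (TensorProduct.assoc R (H ⊗[R] H) H H).toLinearMap ∘ₗ
        (((Coalgebra.comul : H →ₗ[R] H ⊗[R] H).rTensor H).rTensor H) := by
  apply TensorProduct.ext_threefold
  intro a b c
  simp

private lemma P2aux :
    (((Coalgebra.comul : H →ₗ[R] H ⊗[R] H).rTensor H).rTensor H) ∘ₗ
        ((Coalgebra.comul : H →ₗ[R] H ⊗[R] H).rTensor H)
      = (((TensorProduct.assoc R H H H).symm.toLinearMap.rTensor H) ∘ₗ
        (((Coalgebra.comul : H →ₗ[R] H ⊗[R] H).lTensor H).rTensor H)) ∘ₗ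
          ((Coalgebra.comul : H →ₗ[R] H ⊗[R] H).rTensor H) := by
  apply TensorProduct.ext'
  intro a c
  simp

private lemma P3aux :
    ((TensorProduct.tensorTensorTensorComm R H H H H).toLinearMap ∘ₗ
        (TensorProduct.assoc R (H ⊗[R] H) H H).toLinearMap) ∘ₗ
          ((TensorProduct.assoc R H H H).symm.toLinearMap.rTensor H)
      = ((TensorProduct.assoc R (H ⊗[R] H) H H).toLinearMap ∘ₗ
          ((TensorProduct.assoc R H H H).symm.toLinearMap.rTensor H)) ∘ₗ
        (((TensorProduct.comm R H H).toLinearMap.lTensor H).rTensor H) := by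
  apply TensorProduct.ext_threefold
  intro a w c
  induction w using TensorProduct.induction_on with
  | zero => simp only [TensorProduct.tmul_zero, TensorProduct.zero_tmul,
      LinearMap.map_zero]
  | tmul u v => simp
  | add w1 w2 h1 h2 =>
      simp only [TensorProduct.tmul_add, TensorProduct.add_tmul, map_add,
        LinearMap.comp_apply] at h1 h2 ⊢
      rw [h1, h2]

private lemma Pmap :
    TensorProduct.map (Coalgebra.comul : H →ₗ[R] H ⊗[R] H) Coalgebra.comul
      = ((Coalgebra.comul : H →ₗ[R] H ⊗[R] H).rTensor (H ⊗[R] H)) ∘ₗ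
        ((Coalgebra.comul : H →ₗ[R] H ⊗[R] H).lTensor H) := by
  apply TensorProduct.ext'
  intro a b
  simp

end KeyLemma

lemma key (W : WeakPostHopfAlgebroid k R H) (x : H) :
    (TensorProduct.tensorTensorTensorComm R H H H H)
      ((TensorProduct.map Coalgebra.comul Coalgebra.comul) (Coalgebra.comul (R := R) x))
    = (TensorProduct.map Coalgebra.comul Coalgebra.comul) (Coalgebra.comul (R := R) x) := by
  have habs : (((TensorProduct.comm R H H).toLinearMap.lTensor H).rTensor H) ∘ₗ
        (((Coalgebra.comul : H →ₗ[R] H ⊗[R] H).lTensor H).rTensor H)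
      = ((Coalgebra.comul : H →ₗ[R] H ⊗[R] H).lTensor H).rTensor H := by
    rw [← LinearMap.rTensor_comp, ← LinearMap.lTensor_comp, comm_comul W]
  have hco : ((Coalgebra.comul : H →ₗ[R] H ⊗[R] H).lTensor H) ∘ₗ
        (Coalgebra.comul : H →ₗ[R] H ⊗[R] H)
      = (TensorProduct.assoc R H H H).toLinearMap ∘ₗ
        ((Coalgebra.comul : H →ₗ[R] H ⊗[R] H).rTensor H) ∘ₗ
          (Coalgebra.comul : H →ₗ[R] H ⊗[R] H) :=
    (Coalgebra.coassoc (R := R) (A := H)).symm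
  have hv' : TensorProduct.map (Coalgebra.comul : H →ₗ[R] H ⊗[R] H) Coalgebra.comul ∘ₗ
        (Coalgebra.comul : H →ₗ[R] H ⊗[R] H)
      = (TensorProduct.assoc R (H ⊗[R] H) H H).toLinearMap ∘ₗ
        ((TensorProduct.assoc R H H H).symm.toLinearMap.rTensor H) ∘ₗ
        (((Coalgebra.comul : H →ₗ[R] H ⊗[R] H).lTensor H).rTensor H) ∘ₗ
        ((Coalgebra.comul : H →ₗ[R] H ⊗[R] H).rTensor H) ∘ₗ
        (Coalgebra.comul : H →ₗ[R] H ⊗[R] H) := by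
    rw [Pmap, LinearMap.comp_assoc, hco, ← LinearMap.comp_assoc, P1aux R H,
      LinearMap.comp_assoc]
    congr 1
    rw [← LinearMap.comp_assoc, P2aux R H]
    simp only [LinearMap.comp_assoc]
  have main :
      (TensorProduct.tensorTensorTensorComm R H H H H).toLinearMap ∘ₗ
        TensorProduct.map (Coalgebra.comul : H →ₗ[R] H ⊗[R] H) Coalgebra.comul ∘ₗ
          (Coalgebra.comul : H →ₗ[R] H ⊗[R] H)
      = TensorProduct.map (Coalgebra.comul : H →ₗ[R] H ⊗[R] H) Coalgebra.comul ∘ₗ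
          (Coalgebra.comul : H →ₗ[R] H ⊗[R] H) := by
    rw [hv']
    simp only [← LinearMap.comp_assoc]
    rw [P3aux R H, LinearMap.comp_assoc _ _
        ((TensorProduct.assoc R (H ⊗[R] H) H H).toLinearMap ∘ₗ
          ((TensorProduct.assoc R H H H).symm.toLinearMap.rTensor H)),
      habs]
  exact LinearMap.congr_fun main x

lemma comul_mul_sum (W : WeakPostHopfAlgebroid k R H) (a b u v : H) :
    Coalgebra.comul (R := R) a *
        (∑ p ∈ Finset.range (W.n b), W.tr (W.c1 b p) u ⊗ₜ[R] W.tr (W.c2 b p) v)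
      = (TensorProduct.map (W.M u) (W.M v))
          ((TensorProduct.tensorTensorTensorComm R H H H H)
            (Coalgebra.comul (R := R) a ⊗ₜ[R] Coalgebra.comul (R := R) b)) := by
  rw [W.repr a, W.repr b]
  rw [TensorProduct.sum_tmul]
  simp only [TensorProduct.tmul_sum, map_sum, TensorProduct.sum_tmul,
    TensorProduct.tensorTensorTensorComm_tmul, TensorProduct.map_tmul, M_tmul,
    Finset.sum_mul, Finset.mul_sum, Algebra.TensorProduct.tmul_mul_tmul]
  exact Finset.sum_comm

lemma part1 (W : WeakPostHopfAlgebroid k R H) (x y : H) :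
    Coalgebra.comul (R := R) (W.gl x y)
      = ∑ i ∈ Finset.range (W.n x), ∑ j ∈ Finset.range (W.n y),
          W.gl (W.c1 x i) (W.c1 y j) ⊗ₜ[R] W.gl (W.c2 x i) (W.c2 y j) := by
  have expand : (TensorProduct.map Coalgebra.comul Coalgebra.comul)
        (Coalgebra.comul (R := R) x)
      = ∑ i ∈ Finset.range (W.n x),
          Coalgebra.comul (R := R) (W.c1 x i) ⊗ₜ[R] Coalgebra.comul (R := R) (W.c2 x i) := by
    rw [W.repr x, map_sum]
    simp
  calc Coalgebra.comul (R := R) (W.gl x y)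
      = ∑ i ∈ Finset.range (W.n x),
          Coalgebra.comul (R := R) (W.c1 x i) *
            Coalgebra.comul (R := R) (W.tr (W.c2 x i) y) := by
        rw [gl, map_sum]
        simp [Bialgebra.comul_mul]
    _ = ∑ i ∈ Finset.range (W.n x), ∑ j ∈ Finset.range (W.n y),
          (TensorProduct.map (W.M (W.c1 y j)) (W.M (W.c2 y j)))
            ((TensorProduct.tensorTensorTensorComm R H H H H)
              (Coalgebra.comul (R := R) (W.c1 x i) ⊗ₜ[R]
                Coalgebra.comul (R := R) (W.c2 x i))) := by
        refine Finset.sum_congr rfl fun i _ => ?_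
        rw [W.comul_tr (W.c2 x i) y]
        simp only [Finset.mul_sum]
        rw [Finset.sum_comm]
        refine Finset.sum_congr rfl fun j _ => ?_
        rw [← Finset.mul_sum, comul_mul_sum]
    _ = ∑ j ∈ Finset.range (W.n y),
          (TensorProduct.map (W.M (W.c1 y j)) (W.M (W.c2 y j)))
            ((TensorProduct.tensorTensorTensorComm R H H H H)
              ((TensorProduct.map Coalgebra.comul Coalgebra.comul)
                (Coalgebra.comul (R := R) x))) := by
        rw [Finset.sum_comm]
        refine Finset.sum_congr rfl fun j _ => ?_
        rw [expand, map_sum, map_sum]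
    _ = ∑ j ∈ Finset.range (W.n y), ∑ i ∈ Finset.range (W.n x),
          W.gl (W.c1 x i) (W.c1 y j) ⊗ₜ[R] W.gl (W.c2 x i) (W.c2 y j) := by
        refine Finset.sum_congr rfl fun j _ => ?_
        rw [key W x, expand, map_sum]
        refine Finset.sum_congr rfl fun i _ => ?_
        rw [TensorProduct.map_tmul, ← gl_eq, ← gl_eq]
    _ = ∑ i ∈ Finset.range (W.n x), ∑ j ∈ Finset.range (W.n y),
          W.gl (W.c1 x i) (W.c1 y j) ⊗ₜ[R] W.gl (W.c2 x i) (W.c2 y j) :=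
        Finset.sum_comm

lemma tr_algebraMap (W : WeakPostHopfAlgebroid k R H) (f : R) (b : H) :
    W.tr b (algebraMap R H f)
      = algebraMap R H (Coalgebra.counit (R := R) (W.tr b (algebraMap R H f))) := by
  have h := W.counit_tr b (algebraMap R H f)
  rw [Bialgebra.counit_algebraMap] at h
  exact h.symm

/-- `b ↦ ε (b ▷ ι f)` as an `R`-linear functional. -/
noncomputable def D (W : WeakPostHopfAlgebroid k R H) (f : R) : H →ₗ[R] R :=
  (Coalgebra.counit : H →ₗ[R] R) ∘ₗ W.trL (algebraMap R H f)

/-- `a ⊗ b ↦ ε (b ▷ ι f) • a` as an `R`-linear map. -/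
noncomputable def Lm (W : WeakPostHopfAlgebroid k R H) (f : R) : H ⊗[R] H →ₗ[R] H :=
  (TensorProduct.rid R H).toLinearMap ∘ₗ (W.D f).lTensor H

@[simp] lemma Lm_tmul (W : WeakPostHopfAlgebroid k R H) (f : R) (a b : H) :
    W.Lm f (a ⊗ₜ[R] b)
      = Coalgebra.counit (R := R) (W.tr b (algebraMap R H f)) • a := by
  simp [Lm, D]

lemma gl_algebraMap_right (W : WeakPostHopfAlgebroid k R H) (f : R) (a : H) :
    W.gl a (algebraMap R H f) = W.Lm f (Coalgebra.comul (R := R) a) := by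
  rw [gl, W.repr a, map_sum]
  refine Finset.sum_congr rfl fun p _ => ?_
  rw [Lm_tmul, Algebra.smul_def, Algebra.commutes, ← W.tr_algebraMap]

lemma part2 (W : WeakPostHopfAlgebroid k R H) (f : R) (x : H) :
    ∑ i ∈ Finset.range (W.n x), W.gl (W.c1 x i) (algebraMap R H f) ⊗ₜ[R] W.c2 x i
      = ∑ i ∈ Finset.range (W.n x), W.c1 x i ⊗ₜ[R] W.gl (W.c2 x i) (algebraMap R H f) := by
  have P4 : (W.Lm f).rTensor H
      = (((W.Lm f).lTensor H) ∘ₗ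
          ((TensorProduct.comm R H H).toLinearMap.lTensor H)) ∘ₗ
        (TensorProduct.assoc R H H H).toLinearMap := by
    apply TensorProduct.ext_threefold
    intro a b c
    simp [TensorProduct.smul_tmul]
  have habs : ((TensorProduct.comm R H H).toLinearMap.lTensor H) ∘ₗ
        ((Coalgebra.comul : H →ₗ[R] H ⊗[R] H).lTensor H)
      = (Coalgebra.comul : H →ₗ[R] H ⊗[R] H).lTensor H := by
    rw [← LinearMap.lTensor_comp, comm_comul W]
  have hL : ∑ i ∈ Finset.range (W.n x), W.gl (W.c1 x i) (algebraMap R H f) ⊗ₜ[R] W.c2 x i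
      = ((W.Lm f).rTensor H)
          (((Coalgebra.comul : H →ₗ[R] H ⊗[R] H).rTensor H) (Coalgebra.comul x)) := by
    rw [W.repr x, map_sum, map_sum]
    refine Finset.sum_congr rfl fun i _ => ?_
    rw [LinearMap.rTensor_tmul, LinearMap.rTensor_tmul, gl_algebraMap_right]
  have hR : ∑ i ∈ Finset.range (W.n x), W.c1 x i ⊗ₜ[R] W.gl (W.c2 x i) (algebraMap R H f)
      = ((W.Lm f).lTensor H)
          (((Coalgebra.comul : H →ₗ[R] H ⊗[R] H).lTensor H) (Coalgebra.comul x)) := by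
    rw [W.repr x, map_sum, map_sum]
    refine Finset.sum_congr rfl fun i _ => ?_
    rw [LinearMap.lTensor_tmul, LinearMap.lTensor_tmul, gl_algebraMap_right]
  rw [hL, hR, P4]
  simp only [LinearMap.comp_apply]
  rw [show (TensorProduct.assoc R H H H).toLinearMap
        (((Coalgebra.comul : H →ₗ[R] H ⊗[R] H).rTensor H) (Coalgebra.comul x))
      = ((Coalgebra.comul : H →ₗ[R] H ⊗[R] H).lTensor H) (Coalgebra.comul x)
    from Coalgebra.coassoc_apply x]
  rw [← LinearMap.comp_apply (((TensorProduct.comm R H H).toLinearMap).lTensor H), habs]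

lemma gl_algebraMap_left_s4 (W : WeakPostHopfAlgebroid k R H) (r : R) (z : H) :
    W.gl (algebraMap R H r) z = r • z := by
  rw [gl_eq, Bialgebra.comul_algebraMap, Algebra.TensorProduct.algebraMap_apply,
    M_tmul, W.one_tr, ← Algebra.smul_def]

lemma part3 (W : WeakPostHopfAlgebroid k R H) (x : H) :
    ∑ i ∈ Finset.range (W.n x),
        W.gl (algebraMap R H (Coalgebra.counit (R := R) (W.c1 x i))) (W.c2 x i) = x := by
  have h : ∑ i ∈ Finset.range (W.n x),
      W.gl (algebraMap R H (Coalgebra.counit (R := R) (W.c1 x i))) (W.c2 x i)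
      = (TensorProduct.lid R H)
          (((Coalgebra.counit : H →ₗ[R] R).rTensor H) (Coalgebra.comul x)) := by
    rw [W.repr x, map_sum, map_sum]
    refine Finset.sum_congr rfl fun i _ => ?_
    rw [gl_algebraMap_left_s4, LinearMap.rTensor_tmul, TensorProduct.lid_tmul]
  rw [h, Coalgebra.rTensor_counit_comul]
  simp

lemma part4 (W : WeakPostHopfAlgebroid k R H) (x y : H) :
    Coalgebra.counit (R := R) (W.gl x (algebraMap R H (Coalgebra.counit (R := R) y)))
      = Coalgebra.counit (R := R) (W.gl x y) := by
  rw [gl, gl, map_sum, map_sum]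
  refine Finset.sum_congr rfl fun i _ => ?_
  rw [Bialgebra.counit_mul, Bialgebra.counit_mul]
  congr 1
  have h := congrArg (Coalgebra.counit (R := R)) (W.counit_tr (W.c2 x i) y)
  rw [Bialgebra.counit_algebraMap] at h
  exact h.symm

end WeakPostHopfAlgebroid

/-- the Grossman–Larson product satisfies
`Δ(x *_▷ y) = (x₁ *_▷ y₁) ⊗ (x₂ *_▷ y₂)`,
`(x₁ *_▷ ι(f)) ⊗ x₂ = x₁ ⊗ (x₂ *_▷ ι(f))`,
`ι(ε(x₁)) *_▷ x₂ = x` and `ε(x *_▷ ι(ε(y))) = ε(x *_▷ y)`;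
consequently `H_▷ = (H, *_▷, Δ, ε, ι)` is a bialgebroid over `R`
(the Grossman–Larson bialgebroid). -/
theorem stmt4 {k R H : Type*} [Field k] [CharZero k]
    [CommRing R] [Algebra k R] [Ring H] [HopfAlgebra R H]
    [Algebra k H] [IsScalarTower k R H]
    (W : WeakPostHopfAlgebroid k R H) :
    (∀ x y : H, Coalgebra.comul (R := R) (W.gl x y)
        = ∑ i ∈ Finset.range (W.n x), ∑ j ∈ Finset.range (W.n y),
            W.gl (W.c1 x i) (W.c1 y j) ⊗ₜ[R] W.gl (W.c2 x i) (W.c2 y j))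
    ∧ (∀ (f : R) (x : H),
        ∑ i ∈ Finset.range (W.n x), W.gl (W.c1 x i) (algebraMap R H f) ⊗ₜ[R] W.c2 x i
          = ∑ i ∈ Finset.range (W.n x), W.c1 x i ⊗ₜ[R] W.gl (W.c2 x i) (algebraMap R H f))
    ∧ (∀ x : H,
        ∑ i ∈ Finset.range (W.n x),
            W.gl (algebraMap R H (Coalgebra.counit (R := R) (W.c1 x i))) (W.c2 x i) = x)
    ∧ (∀ x y : H,
        Coalgebra.counit (R := R)
            (W.gl x (algebraMap R H (Coalgebra.counit (R := R) y)))
          = Coalgebra.counit (R := R) (W.gl x y)) := by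
  exact ⟨W.part1, W.part2, W.part3, W.part4⟩
end

section
/- Let (H, ι, ▷) be a weak post-Hopf algebroid over R. Define x ⊙ f := ε(x ▷ ι(f)) for x ∈ H, f ∈ R. Then R is a left module algebra over the Grossman–Larson bialgebroid (H, *_▷, Δ, ε, ι): for all x, y ∈ H and f, g ∈ R, (x *_▷ y) ⊙ f = x ⊙ (y ⊙ f), 1_H ⊙ f = f, (g·x) ⊙ f = g·(x ⊙ f), x ⊙ (fg) = (x₁ ⊙ f)(x₂ ⊙ g), and x ⊙ 1_R = ε(x). -/
/-!
STATEMENT 2: In any weak post-Hopf algebroid `(H, ι, ▷)` over `R`, for all `f ∈ R` and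
`x ∈ H` one has `x ▷ ι(f) = ι(ε(x ▷ ι(f)))` and `ι(f) ▷ x = f·x`.

A cocommutative Hopf `R`-algebra is encoded via Mathlib's `HopfAlgebra R H` (so `ι` is
`algebraMap R H`, whose image is central) together with a cocommutativity axiom.  The
comultiplication is handled through a chosen Sweedler representation `comul x = ∑ c1 x i ⊗ c2 x i`.
-/

open scoped TensorProduct

/-- the assignment `x ⊙ f := ε(x ▷ ι(f))` makes `R` a left module algebra
over the Grossman–Larson bialgebroid `(H, *_▷, Δ, ε, ι)`. -/
theorem stmt5 {k R H : Type*} [Field k] [CharZero k]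
    [CommRing R] [Algebra k R] [Ring H] [HopfAlgebra R H]
    [Algebra k H] [IsScalarTower k R H]
    (W : WeakPostHopfAlgebroid k R H) :
    (∀ (x y : H) (f : R),
        Coalgebra.counit (R := R) (W.tr (W.gl x y) (algebraMap R H f))
          = Coalgebra.counit (R := R)
              (W.tr x (algebraMap R H (Coalgebra.counit (R := R) (W.tr y (algebraMap R H f))))))
    ∧ (∀ f : R, Coalgebra.counit (R := R) (W.tr 1 (algebraMap R H f)) = f)
    ∧ (∀ (g : R) (x : H) (f : R),
        Coalgebra.counit (R := R) (W.tr (g • x) (algebraMap R H f))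
          = g * Coalgebra.counit (R := R) (W.tr x (algebraMap R H f)))
    ∧ (∀ (x : H) (f g : R),
        Coalgebra.counit (R := R) (W.tr x (algebraMap R H (f * g)))
          = ∑ i ∈ Finset.range (W.n x),
              Coalgebra.counit (R := R) (W.tr (W.c1 x i) (algebraMap R H f))
                * Coalgebra.counit (R := R) (W.tr (W.c2 x i) (algebraMap R H g)))
    ∧ (∀ x : H, Coalgebra.counit (R := R) (W.tr x (algebraMap R H (1 : R)))
          = Coalgebra.counit (R := R) x) := by
  have hεi : ∀ f : R, Coalgebra.counit (R := R) (algebraMap R H f) = f := fun f => by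
    simpa using (Bialgebra.counitAlgHom R H).commutes f
  refine ⟨?_, ?_, ?_, ?_, ?_⟩
  · intro x y f
    have h4 : algebraMap R H (Coalgebra.counit (R := R) (W.tr y (algebraMap R H f)))
        = W.tr y (algebraMap R H f) := by
      rw [W.counit_tr, hεi]
    rw [h4, WeakPostHopfAlgebroid.gl, ← W.tr_tr]
  · intro f; rw [W.one_tr, hεi]
  · intro g x f; rw [W.tr_smul_left, map_smul, smul_eq_mul]
  · intro x f g
    rw [map_mul, W.tr_mul, map_sum]
    simp [Bialgebra.counit_mul]
  · intro x; rw [map_one, W.tr_one, hεi]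
end

section
/- Let (R, L, [·,·], ρ, ▷) be a post-Lie-Rinehart algebra. Then the sub-adjacent bracket [x,y]_▷ = x ▷ y − y ▷ x + [x,y] satisfies [x, f·y]_▷ = f·[x,y]_▷ + ρ(x)(f)·y for all f ∈ R and x, y ∈ L, and consequently (R, L, [·,·]_▷, ρ) is a Lie-Rinehart algebra (the sub-adjacent Lie-Rinehart algebra). -/
/-!
STATEMENT 12: for a post-Lie-Rinehart algebra `(R, L, [·,·], ρ, ▷)`, the sub-adjacent
bracket `[x,y]_▷ = x ▷ y − y ▷ x + [x,y]` satisfies the Leibniz rule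
`[x, f·y]_▷ = f·[x,y]_▷ + ρ(x)(f)·y`, and `(R, L, [·,·]_▷, ρ)` is a Lie-Rinehart algebra.
-/

/-- The sub-adjacent bracket `[x,y]_▷ := x ▷ y − y ▷ x + [x,y]`. -/
def subAdjBracket {k R L : Type*} [Field k] [CommRing R] [Algebra k R]
    [AddCommGroup L] [Module k L] [Module R L] [IsScalarTower k R L]
    (b : L →ₗ[R] L →ₗ[R] L) (t : L →ₗ[k] L →ₗ[k] L) (x y : L) : L :=
  t x y - t y x + b x y

theorem stmt12 {k R L : Type*} [Field k] [CharZero k] [CommRing R] [Algebra k R]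
    [AddCommGroup L] [Module k L] [Module R L] [IsScalarTower k R L]
    -- the `R`-bilinear Lie bracket on `L`
    (b : L →ₗ[R] L →ₗ[R] L)
    (hb_alt : ∀ x : L, b x x = 0)
    (hb_jac : ∀ x y z : L, b x (b y z) + b y (b z x) + b z (b x y) = 0)
    -- the `k`-bilinear post-Lie product `▷`
    (t : L →ₗ[k] L →ₗ[k] L)
    (hpl1 : ∀ x y z : L, t x (b y z) = b (t x y) z + b y (t x z))
    (hpl2 : ∀ x y z : L,
      t (b x y + t x y - t y x) z = t x (t y z) - t y (t x z))
    -- the anchor: an `R`-linear map which is a Lie algebra homomorphism from the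
    -- sub-adjacent Lie algebra to `Der_k(R)`
    (ρ : L →ₗ[R] Derivation k R R)
    (hρ : ∀ x y : L, ρ (subAdjBracket b t x y) = ⁅ρ x, ρ y⁆)
    -- compatibility conditions
    (hc1 : ∀ (f : R) (x y : L), t (f • x) y = f • t x y)
    (hc2 : ∀ (f : R) (x y : L), t x (f • y) = f • t x y + ρ x f • y) :
    -- the Leibniz rule for the sub-adjacent bracket
    (∀ (f : R) (x y : L),
        subAdjBracket b t x (f • y) = f • subAdjBracket b t x y + ρ x f • y)
    -- so that `(R, L, [·,·]_▷, ρ)` is a Lie-Rinehart algebra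
    ∧ (∀ x : L, subAdjBracket b t x x = 0)
    ∧ (∀ x y z : L,
        subAdjBracket b t x (subAdjBracket b t y z)
          + subAdjBracket b t y (subAdjBracket b t z x)
          + subAdjBracket b t z (subAdjBracket b t x y) = 0) := by
  have hpair : ∀ u v : L, b u v + b v u = 0 := by
    intro u v
    have h := hb_alt (u + v)
    simp only [map_add, LinearMap.add_apply, hb_alt] at h
    rw [add_comm]
    simpa using h
  have h2' : ∀ a c d : L, t (b a c) d
      = t a (t c d) - t c (t a d) - t (t a c) d + t (t c a) d := by
    intro a c d
    have h := hpl2 a c d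
    have e : t (b a c) d - (t a (t c d) - t c (t a d) - t (t a c) d + t (t c a) d)
        = t (b a c + t a c - t c a) d - (t a (t c d) - t c (t a d)) := by
      simp only [map_add, map_sub, LinearMap.add_apply, LinearMap.sub_apply]
      abel
    have h0 : t (b a c) d - (t a (t c d) - t c (t a d) - t (t a c) d + t (t c a) d) = 0 := by
      rw [e, h, sub_self]
    exact sub_eq_zero.mp h0
  refine ⟨?_, ?_, ?_⟩
  · intro f x y
    simp only [subAdjBracket, hc2, hc1, map_smul, smul_add, smul_sub]
    abel
  · intro x
    simp [subAdjBracket, hb_alt]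
  · intro x y z
    simp only [subAdjBracket, map_add, map_sub, LinearMap.add_apply, LinearMap.sub_apply,
      hpl1, h2']
    trans ((b x (b y z) + b y (b z x) + b z (b x y))
       + ((b (t x y) z + b z (t x y))
          + ((b (t y z) x + b x (t y z)) + (b (t z x) y + b y (t z x)))))
    · abel
    · rw [hb_jac, hpair, hpair, hpair]; simp
end

section
/- Let (g, [·,·]_g, ▷) be a post-Lie algebra over k and let ρ : g_▷ → Der_k(R) be a Lie algebra homomorphism from the sub-adjacent Lie algebra. On the R-module L = R ⊗ g define [f₁ ⊗ x₁, f₂ ⊗ x₂]_L = f₁f₂ ⊗ [x₁,x₂]_g, (f₁ ⊗ x₁) ⊵ (f₂ ⊗ x₂) = f₁·ρ(x₁)(f₂) ⊗ x₂ + f₁f₂ ⊗ (x₁ ▷ x₂), and the R-linear anchor ρ̄(f ⊗ x) = f·ρ(x). Then (R, L, [·,·]_L, ρ̄, ⊵) is a post-Lie-Rinehart algebra (the action post-Lie-Rinehart algebra), and its sub-adjacent bracket satisfies [f₁ ⊗ x₁, f₂ ⊗ x₂]_⊵ = f₁·ρ(x₁)(f₂) ⊗ x₂ − f₂·ρ(x₂)(f₁)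 ⊗ x₁ + f₁f₂ ⊗ [x₁,x₂]_▷. -/
/-!
Write `D x = ρ x ⊗ 1 + 1 ⊗ (x ▷ ·)` for `x : g`, so that `(f ⊗ x) ⊵ u = f • D x u`.
Each `D x` is a derivation of the bracket of `R ⊗ g`, because `ρ x` is a derivation of `R`
and `x ▷ ·` one of `g`; it satisfies the Leibniz rule `D x (f • u) = f • D x u + ρ x f • u`;
and `x ↦ D x` is a Lie algebra homomorphism on `g_▷`, by the second post-Lie axiom together
with the hypothesis on `ρ`. The axioms of `L` are additive in each variable, so it suffices to
check them on pure tensors, where they follow from these three facts: the commutator of two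
operators `f • D x` and `h • D y` is computed by the Leibniz rule alone, exactly as that of
`f • ρ x` and `h • ρ y`.
-/

open TensorProduct

theorem Derivation.smul_lie_smul {k A : Type*} [CommRing k] [CommRing A] [Algebra k A]
    (D₁ D₂ : Derivation k A A) (a b : A) :
    ⁅a • D₁, b • D₂⁆ = (a * D₁ b) • D₂ - (b * D₂ a) • D₁ + (a * b) • ⁅D₁, D₂⁆ := by
  ext c
  simp only [commutator_apply, smul_apply, leibniz, smul_eq_mul, add_apply, sub_apply]
  ring

theorem Module.End.smul_lie_smul_of_leibniz {k R M : Type*} [CommRing k] [CommRing R]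
    [Algebra k R] [AddCommGroup M] [Module k M] [Module R M] [IsScalarTower k R M]
    {D₁ D₂ : Module.End k M} {δ₁ δ₂ : R → R}
    (h₁ : ∀ (b : R) (m : M), D₁ (b • m) = b • D₁ m + δ₁ b • m)
    (h₂ : ∀ (b : R) (m : M), D₂ (b • m) = b • D₂ m + δ₂ b • m) (a b : R) :
    ⁅a • D₁, b • D₂⁆ = (a * δ₁ b) • D₂ - (b * δ₂ a) • D₁ + (a * b) • ⁅D₁, D₂⁆ := by
  ext m
  simp only [Ring.lie_def, LinearMap.sub_apply, LinearMap.add_apply, Module.End.mul_apply,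
    LinearMap.smul_apply, h₁, h₂, smul_add, smul_sub, smul_smul]
  rw [mul_comm b a]
  abel

section

variable {k R g : Type*} [CommRing k] [CommRing R] [Algebra k R] [LieRing g] [LieAlgebra k g]

theorem TensorProduct.map_lie_of_map_lie_tmul {D : R ⊗[k] g →ₗ[k] R ⊗[k] g}
    (h : ∀ (a b : R) (x y : g),
      D ⁅a ⊗ₜ[k] x, b ⊗ₜ[k] y⁆ = ⁅D (a ⊗ₜ[k] x), b ⊗ₜ[k] y⁆ + ⁅a ⊗ₜ[k] x, D (b ⊗ₜ[k] y)⁆)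
    (u v : R ⊗[k] g) : D ⁅u, v⁆ = ⁅D u, v⁆ + ⁅u, D v⁆ := by
  induction u using TensorProduct.induction_on with
  | zero => simp
  | add u u' hu hu' => simp only [map_add, add_lie, hu, hu']; abel
  | tmul a x =>
    induction v using TensorProduct.induction_on with
    | zero => simp
    | add v v' hv hv' => simp only [map_add, lie_add, hv, hv']; abel
    | tmul b y => exact h a b x y

theorem TensorProduct.map_subadjacent_of_tmul {A : Type*} [LieRing A] [Module k A]
    {P : R ⊗[k] g →ₗ[k] R ⊗[k] g →ₗ[k] R ⊗[k] g} {φ : R ⊗[k] g →ₗ[k] A}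
    (h : ∀ (a b : R) (x y : g),
      φ (P (a ⊗ₜ[k] x) (b ⊗ₜ[k] y) - P (b ⊗ₜ[k] y) (a ⊗ₜ[k] x) + ⁅a ⊗ₜ[k] x, b ⊗ₜ[k] y⁆)
        = ⁅φ (a ⊗ₜ[k] x), φ (b ⊗ₜ[k] y)⁆)
    (u v : R ⊗[k] g) : φ (P u v - P v u + ⁅u, v⁆) = ⁅φ u, φ v⁆ := by
  induction u using TensorProduct.induction_on with
  | zero => simp
  | add u u' hu hu' =>
    simp only [map_add, map_sub, LinearMap.add_apply, add_lie] at hu hu' ⊢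
    rw [← hu, ← hu']; abel
  | tmul a x =>
    induction v using TensorProduct.induction_on with
    | zero => simp
    | add v v' hv hv' =>
      simp only [map_add, map_sub, LinearMap.add_apply, lie_add] at hv hv' ⊢
      rw [← hv, ← hv']; abel
    | tmul b y => exact h a b x y

variable (t : g →ₗ[k] g →ₗ[k] g) (ρ : g →ₗ[k] Derivation k R R)

noncomputable def actionDeriv : g →ₗ[k] Module.End k (R ⊗[k] g) where
  toFun x := (ρ x : R →ₗ[k] R).rTensor g + (t x).lTensor R
  map_add' x y := TensorProduct.ext' fun a z => by
    simp only [map_add, LinearMap.add_apply, LinearMap.rTensor_tmul, LinearMap.lTensor_tmul,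
      Derivation.coeFn_coe, Derivation.add_apply, add_tmul, tmul_add]
    abel
  map_smul' c x := TensorProduct.ext' fun a z => by
    simp only [map_smul, LinearMap.add_apply, LinearMap.smul_apply, LinearMap.rTensor_tmul,
      LinearMap.lTensor_tmul, Derivation.coeFn_coe, Derivation.smul_apply, RingHom.id_apply,
      smul_tmul, tmul_smul, smul_add]

theorem actionDeriv_tmul (x : g) (a : R) (y : g) :
    actionDeriv t ρ x (a ⊗ₜ[k] y) = ρ x a ⊗ₜ[k] y + a ⊗ₜ[k] t x y := rfl

theorem actionDeriv_smul (x : g) (b : R) (u : R ⊗[k] g) :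
    actionDeriv t ρ x (b • u) = b • actionDeriv t ρ x u + ρ x b • u := by
  induction u using TensorProduct.induction_on with
  | zero => simp
  | add u u' hu hu' => simp only [smul_add, map_add, hu, hu']; abel
  | tmul a y =>
    simp only [smul_tmul', smul_eq_mul, actionDeriv_tmul, Derivation.leibniz, smul_add, add_tmul]
    rw [mul_comm a]
    abel

theorem actionDeriv_lie (hpl1 : ∀ x y z : g, t x ⁅y, z⁆ = ⁅t x y, z⁆ + ⁅y, t x z⁆)
    (x : g) (u v : R ⊗[k] g) :
    actionDeriv t ρ x ⁅u, v⁆ = ⁅actionDeriv t ρ x u, v⁆ + ⁅u, actionDeriv t ρ x v⁆ := by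
  refine TensorProduct.map_lie_of_map_lie_tmul (fun a b y z => ?_) u v
  simp only [LieAlgebra.ExtendScalars.bracket_tmul, actionDeriv_tmul, add_lie, lie_add, hpl1,
    Derivation.leibniz, smul_eq_mul, add_tmul, tmul_add]
  rw [mul_comm (ρ x a)]
  abel

theorem actionDeriv_subadjacent
    (hpl2 : ∀ x y z : g, t (⁅x, y⁆ + t x y - t y x) z = t x (t y z) - t y (t x z))
    (hρ : ∀ x y : g, ρ (t x y - t y x + ⁅x, y⁆) = ⁅ρ x, ρ y⁆) (x y : g) :
    actionDeriv t ρ (t x y - t y x + ⁅x, y⁆) = ⁅actionDeriv t ρ x, actionDeriv t ρ y⁆ := by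
  have hpl2' : t (t x y - t y x + ⁅x, y⁆) = ⁅t x, t y⁆ := by
    ext z
    have := hpl2 x y z
    rw [show ⁅x, y⁆ + t x y - t y x = t x y - t y x + ⁅x, y⁆ by abel] at this
    simpa only [Ring.lie_def, LinearMap.sub_apply, Module.End.mul_apply] using this
  refine TensorProduct.ext' fun a z => ?_
  rw [actionDeriv_tmul, hρ, hpl2']
  simp only [Ring.lie_def, LinearMap.sub_apply, Module.End.mul_apply, actionDeriv_tmul, map_add,
    Derivation.commutator_apply, sub_tmul, tmul_sub]
  abel

noncomputable def actionProduct : R ⊗[k] g →ₗ[k] R ⊗[k] g →ₗ[k] R ⊗[k] g :=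
  ((actionDeriv t ρ).liftBaseChange R).restrictScalars k

theorem actionProduct_tmul (a : R) (x : g) :
    actionProduct t ρ (a ⊗ₜ[k] x) = a • actionDeriv t ρ x := rfl

theorem actionProduct_tmul_tmul (a b : R) (x y : g) :
    actionProduct t ρ (a ⊗ₜ[k] x) (b ⊗ₜ[k] y)
      = (a * ρ x b) ⊗ₜ[k] y + (a * b) ⊗ₜ[k] t x y := by
  simp only [actionProduct_tmul, LinearMap.smul_apply, actionDeriv_tmul, smul_add, smul_tmul',
    smul_eq_mul]

theorem actionProduct_smul_left (f : R) (u v : R ⊗[k] g) :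
    actionProduct t ρ (f • u) v = f • actionProduct t ρ u v :=
  LinearMap.congr_fun (((actionDeriv t ρ).liftBaseChange R).map_smul f u) v

theorem actionProduct_smul_right (f : R) (u v : R ⊗[k] g) :
    actionProduct t ρ u (f • v)
      = f • actionProduct t ρ u v + (ρ.liftBaseChange R) u f • v := by
  induction u using TensorProduct.induction_on with
  | zero => simp
  | add u u' hu hu' =>
    simp only [map_add, LinearMap.add_apply, hu, hu', Derivation.add_apply, add_smul, smul_add]
    abel
  | tmul a x =>
    simp only [actionProduct_tmul, LinearMap.smul_apply, actionDeriv_smul, smul_add,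
      LinearMap.liftBaseChange_tmul, Derivation.smul_apply, smul_eq_mul, smul_smul, mul_comm a f]

theorem actionProduct_lie (hpl1 : ∀ x y z : g, t x ⁅y, z⁆ = ⁅t x y, z⁆ + ⁅y, t x z⁆)
    (u v w : R ⊗[k] g) :
    actionProduct t ρ u ⁅v, w⁆ = ⁅actionProduct t ρ u v, w⁆ + ⁅v, actionProduct t ρ u w⁆ := by
  induction u using TensorProduct.induction_on with
  | zero => simp
  | add u u' hu hu' => simp only [map_add, LinearMap.add_apply, hu, hu', add_lie, lie_add]; abel
  | tmul a x =>
    simp only [actionProduct_tmul, LinearMap.smul_apply, actionDeriv_lie t ρ hpl1, smul_add,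
      smul_lie, lie_smul]

theorem actionProduct_subadjacent_tmul (a b : R) (x y : g) :
    actionProduct t ρ (a ⊗ₜ[k] x) (b ⊗ₜ[k] y) - actionProduct t ρ (b ⊗ₜ[k] y) (a ⊗ₜ[k] x)
        + ⁅a ⊗ₜ[k] x, b ⊗ₜ[k] y⁆
      = (a * ρ x b) ⊗ₜ[k] y - (b * ρ y a) ⊗ₜ[k] x
        + (a * b) ⊗ₜ[k] (t x y - t y x + ⁅x, y⁆) := by
  simp only [actionProduct_tmul_tmul, LieAlgebra.ExtendScalars.bracket_tmul, tmul_add, tmul_sub,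
    mul_comm b a]
  abel

theorem actionProduct_subadjacent
    (hpl2 : ∀ x y z : g, t (⁅x, y⁆ + t x y - t y x) z = t x (t y z) - t y (t x z))
    (hρ : ∀ x y : g, ρ (t x y - t y x + ⁅x, y⁆) = ⁅ρ x, ρ y⁆) (u v : R ⊗[k] g) :
    actionProduct t ρ (actionProduct t ρ u v - actionProduct t ρ v u + ⁅u, v⁆)
      = ⁅actionProduct t ρ u, actionProduct t ρ v⁆ := by
  -- the commutator Lie ring structure of an associative ring is not a global instance
  let _ := LieRing.ofAssociativeRing (A := Module.End k (R ⊗[k] g))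
  refine TensorProduct.map_subadjacent_of_tmul (fun a b x y => ?_) u v
  rw [actionProduct_subadjacent_tmul, map_add, map_sub]
  simp only [actionProduct_tmul]
  rw [actionDeriv_subadjacent t ρ hpl2 hρ,
    Module.End.smul_lie_smul_of_leibniz (actionDeriv_smul t ρ x) (actionDeriv_smul t ρ y)]

theorem anchor_subadjacent (hρ : ∀ x y : g, ρ (t x y - t y x + ⁅x, y⁆) = ⁅ρ x, ρ y⁆)
    (u v : R ⊗[k] g) :
    ρ.liftBaseChange R (actionProduct t ρ u v - actionProduct t ρ v u + ⁅u, v⁆)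
      = ⁅ρ.liftBaseChange R u, ρ.liftBaseChange R v⁆ := by
  refine TensorProduct.map_subadjacent_of_tmul (A := Derivation k R R)
    (φ := (ρ.liftBaseChange R).restrictScalars k) (fun a b x y => ?_) u v
  simp only [LinearMap.restrictScalars_apply, actionProduct_subadjacent_tmul, map_add, map_sub,
    LinearMap.liftBaseChange_tmul, hρ, Derivation.smul_lie_smul]

end

theorem stmt14_general {k R g : Type*} [Field k] [CommRing R] [Algebra k R]
    [LieRing g] [LieAlgebra k g]
    -- the `k`-bilinear post-Lie product on the Lie algebra `g`
    (t : g →ₗ[k] g →ₗ[k] g)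
    (hpl1 : ∀ x y z : g, t x ⁅y, z⁆ = ⁅t x y, z⁆ + ⁅y, t x z⁆)
    (hpl2 : ∀ x y z : g,
      t (⁅x, y⁆ + t x y - t y x) z = t x (t y z) - t y (t x z))
    -- a Lie algebra homomorphism `ρ : g_▷ → Der_k(R)` from the sub-adjacent Lie algebra
    (ρ : g →ₗ[k] Derivation k R R)
    (hρ : ∀ x y : g, ρ (t x y - t y x + ⁅x, y⁆) = ⁅ρ x, ρ y⁆) :
    ∃ (bL : (R ⊗[k] g) →ₗ[R] (R ⊗[k] g) →ₗ[R] (R ⊗[k] g))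
      (tL : (R ⊗[k] g) →ₗ[k] (R ⊗[k] g) →ₗ[k] (R ⊗[k] g))
      (ρL : (R ⊗[k] g) →ₗ[R] Derivation k R R),
      -- the defining formulas of the action structure
      (∀ (f₁ f₂ : R) (x₁ x₂ : g),
          bL (f₁ ⊗ₜ[k] x₁) (f₂ ⊗ₜ[k] x₂) = (f₁ * f₂) ⊗ₜ[k] ⁅x₁, x₂⁆)
      ∧ (∀ (f₁ f₂ : R) (x₁ x₂ : g),
          tL (f₁ ⊗ₜ[k] x₁) (f₂ ⊗ₜ[k] x₂)
            = (f₁ * ρ x₁ f₂) ⊗ₜ[k] x₂ + (f₁ * f₂) ⊗ₜ[k] t x₁ x₂)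
      ∧ (∀ (f : R) (x : g), ρL (f ⊗ₜ[k] x) = f • ρ x)
      -- `(L, [·,·]_L)` is a Lie algebra with an `R`-bilinear bracket
      ∧ (∀ x : R ⊗[k] g, bL x x = 0)
      ∧ (∀ x y z : R ⊗[k] g, bL x (bL y z) + bL y (bL z x) + bL z (bL x y) = 0)
      -- `(L, [·,·]_L, ⊵)` is a post-Lie algebra
      ∧ (∀ x y z : R ⊗[k] g, tL x (bL y z) = bL (tL x y) z + bL y (tL x z))
      ∧ (∀ x y z : R ⊗[k] g,
          tL (bL x y + tL x y - tL y x) z = tL x (tL y z) - tL y (tL x z))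
      -- the anchor is a Lie algebra homomorphism from the sub-adjacent Lie algebra
      ∧ (∀ x y : R ⊗[k] g,
          ρL (tL x y - tL y x + bL x y) = ⁅ρL x, ρL y⁆)
      -- the compatibility conditions
      ∧ (∀ (f : R) (x y : R ⊗[k] g), tL (f • x) y = f • tL x y)
      ∧ (∀ (f : R) (x y : R ⊗[k] g), tL x (f • y) = f • tL x y + ρL x f • y)
      -- the sub-adjacent bracket
      ∧ (∀ (f₁ f₂ : R) (x₁ x₂ : g),
          tL (f₁ ⊗ₜ[k] x₁) (f₂ ⊗ₜ[k] x₂) - tL (f₂ ⊗ₜ[k] x₂) (f₁ ⊗ₜ[k] x₁)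
              + bL (f₁ ⊗ₜ[k] x₁) (f₂ ⊗ₜ[k] x₂)
            = (f₁ * ρ x₁ f₂) ⊗ₜ[k] x₂ - (f₂ * ρ x₂ f₁) ⊗ₜ[k] x₁
              + (f₁ * f₂) ⊗ₜ[k] (t x₁ x₂ - t x₂ x₁ + ⁅x₁, x₂⁆)) := by
  refine ⟨LinearMap.mk₂ R (⁅·, ·⁆) add_lie smul_lie lie_add lie_smul, actionProduct t ρ,
    ρ.liftBaseChange R, fun _ _ _ _ => rfl, actionProduct_tmul_tmul t ρ, fun _ _ => rfl,
    lie_self, lie_jacobi, actionProduct_lie t ρ hpl1, fun u v w => ?_, anchor_subadjacent t ρ hρ,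
    actionProduct_smul_left t ρ, actionProduct_smul_right t ρ,
    actionProduct_subadjacent_tmul t ρ⟩
  rw [LinearMap.mk₂_apply, add_sub_assoc, add_comm, actionProduct_subadjacent t ρ hpl2 hρ]
  rfl

theorem stmt14 {k R g : Type*} [Field k] [CharZero k] [CommRing R] [Algebra k R]
    [LieRing g] [LieAlgebra k g]
    -- the `k`-bilinear post-Lie product on the Lie algebra `g`
    (t : g →ₗ[k] g →ₗ[k] g)
    (hpl1 : ∀ x y z : g, t x ⁅y, z⁆ = ⁅t x y, z⁆ + ⁅y, t x z⁆)
    (hpl2 : ∀ x y z : g,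
      t (⁅x, y⁆ + t x y - t y x) z = t x (t y z) - t y (t x z))
    -- a Lie algebra homomorphism `ρ : g_▷ → Der_k(R)` from the sub-adjacent Lie algebra
    (ρ : g →ₗ[k] Derivation k R R)
    (hρ : ∀ x y : g, ρ (t x y - t y x + ⁅x, y⁆) = ⁅ρ x, ρ y⁆) :
    ∃ (bL : (R ⊗[k] g) →ₗ[R] (R ⊗[k] g) →ₗ[R] (R ⊗[k] g))
      (tL : (R ⊗[k] g) →ₗ[k] (R ⊗[k] g) →ₗ[k] (R ⊗[k] g))
      (ρL : (R ⊗[k] g) →ₗ[R] Derivation k R R),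
      -- the defining formulas of the action structure
      (∀ (f₁ f₂ : R) (x₁ x₂ : g),
          bL (f₁ ⊗ₜ[k] x₁) (f₂ ⊗ₜ[k] x₂) = (f₁ * f₂) ⊗ₜ[k] ⁅x₁, x₂⁆)
      ∧ (∀ (f₁ f₂ : R) (x₁ x₂ : g),
          tL (f₁ ⊗ₜ[k] x₁) (f₂ ⊗ₜ[k] x₂)
            = (f₁ * ρ x₁ f₂) ⊗ₜ[k] x₂ + (f₁ * f₂) ⊗ₜ[k] t x₁ x₂)
      ∧ (∀ (f : R) (x : g), ρL (f ⊗ₜ[k] x) = f • ρ x)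
      -- `(L, [·,·]_L)` is a Lie algebra with an `R`-bilinear bracket
      ∧ (∀ x : R ⊗[k] g, bL x x = 0)
      ∧ (∀ x y z : R ⊗[k] g, bL x (bL y z) + bL y (bL z x) + bL z (bL x y) = 0)
      -- `(L, [·,·]_L, ⊵)` is a post-Lie algebra
      ∧ (∀ x y z : R ⊗[k] g, tL x (bL y z) = bL (tL x y) z + bL y (tL x z))
      ∧ (∀ x y z : R ⊗[k] g,
          tL (bL x y + tL x y - tL y x) z = tL x (tL y z) - tL y (tL x z))
      -- the anchor is a Lie algebra homomorphism from the sub-adjacent Lie algebra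
      ∧ (∀ x y : R ⊗[k] g,
          ρL (tL x y - tL y x + bL x y) = ⁅ρL x, ρL y⁆)
      -- the compatibility conditions
      ∧ (∀ (f : R) (x y : R ⊗[k] g), tL (f • x) y = f • tL x y)
      ∧ (∀ (f : R) (x y : R ⊗[k] g), tL x (f • y) = f • tL x y + ρL x f • y)
      -- the sub-adjacent bracket
      ∧ (∀ (f₁ f₂ : R) (x₁ x₂ : g),
          tL (f₁ ⊗ₜ[k] x₁) (f₂ ⊗ₜ[k] x₂) - tL (f₂ ⊗ₜ[k] x₂) (f₁ ⊗ₜ[k] x₁)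
              + bL (f₁ ⊗ₜ[k] x₁) (f₂ ⊗ₜ[k] x₂)
            = (f₁ * ρ x₁ f₂) ⊗ₜ[k] x₂ - (f₂ * ρ x₂ f₁) ⊗ₜ[k] x₁
              + (f₁ * f₂) ⊗ₜ[k] (t x₁ x₂ - t x₂ x₁ + ⁅x₁, x₂⁆)) :=
  stmt14_general t hpl1 hpl2 ρ hρ
end

section
/- Let (V, ↷) be a magma algebra over k, let Lie(V) be the free Lie algebra on V with canonical embedding i_V : V → Lie(V), and suppose ▷_V is a post-Lie product on Lie(V) with i_V(u) ▷_V i_V(v) = i_V(u ↷ v) which makes (Lie(V), [·,·], ▷_V) the free post-Lie algebra on (V, ↷): for every post-Lie algebra (g, [·,·]_g, ▷) and every linear map φ : V → g with φ(u ↷ v) = φ(u) ▷ φ(v), there is a unique post-Lie algebra homomorphism φ̃ : Lie(V) → g with φ̃ ∘ i_V = φ. Let f_V : V → Der_k(R) be a linear map and suppose ρ_V : Lie(V) → Der_k(R) is a Lie algebra homomorphism from the sub-adjacent Lie algebra Lie(V)_{▷_V} with ρ_V ∘ i_V = f_V. Let PostLR(V) be the action post-Lie-Rinehart algebra (R, R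 ⊗ Lie(V), [·,·], ρ̄_V, ⊵_V) built from (Lie(V), [·,·], ▷_V) and ρ_V. Then PostLR(V) is the free post-Lie-Rinehart algebra on (V, ↷, f_V): for every post-Lie-Rinehart algebra (R, L, [·,·]_L, ρ, ▷) and every linear map φ : V → L with φ(u ↷ v) = φ(u) ▷ φ(v) and ρ ∘ φ = f_V, there exists a unique post-Lie-Rinehart algebra homomorphism φ̃ : R ⊗ Lie(V) → L (an R-linear map preserving the brackets, the products ▷, and the anchors) such that φ̃(1 ⊗ i_V(v)) = φ(v) for all v ∈ V. -/
open scoped TensorProduct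

universe v


section PLAux

/-- Filtration-style closure: elements of "Lie-degree ≤ n+1" built from `s`. -/
inductive PLFil (k : Type*) {G : Type*} [CommRing k] [LieRing G] [LieAlgebra k G]
    (s : Set G) : ℕ → G → Prop
  | base {x : G} : x ∈ s → PLFil k s 0 x
  | zero (n : ℕ) : PLFil k s n 0
  | add {n : ℕ} {x y : G} : PLFil k s n x → PLFil k s n y → PLFil k s n (x + y)
  | smul (c : k) {n : ℕ} {x : G} : PLFil k s n x → PLFil k s n (c • x)
  | mono {n : ℕ} {x : G} : PLFil k s n x → PLFil k s (n + 1) x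
  | lie {p q : ℕ} {x y : G} : PLFil k s p x → PLFil k s q y → PLFil k s (p + q + 1) ⁅x, y⁆

/-- Closure under subadjacent brackets. -/
inductive PLSAC {k : Type*} {G : Type*} [CommRing k] [LieRing G] [LieAlgebra k G]
    (s : Set G) (t : G →ₗ[k] G →ₗ[k] G) : G → Prop
  | base {x : G} : x ∈ s → PLSAC s t x
  | zero : PLSAC s t 0
  | add {x y : G} : PLSAC s t x → PLSAC s t y → PLSAC s t (x + y)
  | smul (c : k) {x : G} : PLSAC s t x → PLSAC s t (c • x)
  | sb {x y : G} : PLSAC s t x → PLSAC s t y → PLSAC s t (t x y - t y x + ⁅x, y⁆)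

namespace PLFil

variable {k : Type*} {G : Type*} [CommRing k] [LieRing G] [LieAlgebra k G] {s : Set G}

lemma neg {n : ℕ} {x : G} (h : PLFil k s n x) : PLFil k s n (-x) := by
  have := h.smul (-1 : k)
  rwa [neg_one_smul] at this

lemma sub {n : ℕ} {x y : G} (hx : PLFil k s n x) (hy : PLFil k s n y) :
    PLFil k s n (x - y) := by
  rw [sub_eq_add_neg]; exact hx.add hy.neg

lemma le {n m : ℕ} {x : G} (h : PLFil k s n x) (hnm : n ≤ m) : PLFil k s m x := by
  induction hnm with
  | refl => exact h
  | step _ ih => exact ih.mono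

lemma tbase (t : G →ₗ[k] G →ₗ[k] G)
    (ht1 : ∀ x y z : G, t x ⁅y, z⁆ = ⁅t x y, z⁆ + ⁅y, t x z⁆)
    (hs : ∀ a ∈ s, ∀ b ∈ s, t a b ∈ s)
    {a : G} (ha : a ∈ s) {q : ℕ} {y : G} (hy : PLFil k s q y) :
    PLFil k s q (t a y) := by
  induction hy with
  | base hb => exact .base (hs _ ha _ hb)
  | zero n => rw [map_zero]; exact .zero n
  | add h1 h2 ih1 ih2 => rw [map_add]; exact ih1.add ih2
  | smul c h ih => rw [map_smul]; exact ih.smul c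
  | mono h ih => exact ih.mono
  | lie h1 h2 ih1 ih2 =>
      rw [ht1]
      exact (ih1.lie h2).add (h1.lie ih2)

lemma tmul_aux (t : G →ₗ[k] G →ₗ[k] G)
    (ht1 : ∀ x y z : G, t x ⁅y, z⁆ = ⁅t x y, z⁆ + ⁅y, t x z⁆)
    (ht2 : ∀ x y z : G, t (⁅x, y⁆ + t x y - t y x) z = t x (t y z) - t y (t x z))
    (hs : ∀ a ∈ s, ∀ b ∈ s, t a b ∈ s) :
    ∀ {p : ℕ} {x : G}, PLFil k s p x →
      (∀ m, m < p → ∀ x' : G, PLFil k s m x' →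
        ∀ (q : ℕ) (y : G), PLFil k s q y → PLFil k s (m + q) (t x' y)) →
      ∀ (q : ℕ) (y : G), PLFil k s q y → PLFil k s (p + q) (t x y) := by
  intro p x hx
  induction hx with
  | base ha =>
      intro _ q y hy
      have h := tbase t ht1 hs ha hy
      simpa using h
  | zero n =>
      intro _ q y hy
      rw [map_zero, LinearMap.zero_apply]
      exact .zero _
  | add h1 h2 ih1 ih2 =>
      intro OIH q y hy
      rw [map_add, LinearMap.add_apply]
      exact (ih1 OIH q y hy).add (ih2 OIH q y hy)
  | smul c h ih =>
      intro OIH q y hy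
      rw [map_smul, LinearMap.smul_apply]
      exact (ih OIH q y hy).smul c
  | @mono n x h ih =>
      intro OIH q y hy
      have h' := (ih (fun m hm => OIH m (by omega)) q y hy).mono
      have e : n + 1 + q = n + q + 1 := by omega
      rw [e]; exact h'
  | @lie p₁ p₂ x₁ x₂ h1 h2 ih1 ih2 =>
      intro OIH q y hy
      have O1 : ∀ m, m < p₁ → ∀ x' : G, PLFil k s m x' →
          ∀ (q' : ℕ) (y' : G), PLFil k s q' y' → PLFil k s (m + q') (t x' y') :=
        fun m hm => OIH m (by omega)
      have O2 : ∀ m, m < p₂ → ∀ x' : G, PLFil k s m x' →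
          ∀ (q' : ℕ) (y' : G), PLFil k s q' y' → PLFil k s (m + q') (t x' y') :=
        fun m hm => OIH m (by omega)
      have hx2y := ih2 O2 q y hy
      have hA := ih1 O1 _ _ hx2y
      have hx1y := ih1 O1 q y hy
      have hB := ih2 O2 _ _ hx1y
      have h12 := ih1 O1 _ _ h2
      have h21 := ih2 O2 _ _ h1
      have hC := OIH (p₁ + p₂) (by omega) _ h12 q y hy
      have hD := OIH (p₂ + p₁) (by omega) _ h21 q y hy
      have key : t ⁅x₁, x₂⁆ y
          = t x₁ (t x₂ y) - t x₂ (t x₁ y) - t (t x₁ x₂) y + t (t x₂ x₁) y := by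
        have h := ht2 x₁ x₂ y
        rw [map_sub, map_add, LinearMap.sub_apply, LinearMap.add_apply] at h
        rw [← h]; abel
      have e1 : p₁ + (p₂ + q) = p₁ + p₂ + q := by omega
      rw [e1] at hA
      have e2 : p₂ + (p₁ + q) = p₁ + p₂ + q := by omega
      rw [e2] at hB
      have e4 : p₂ + p₁ + q = p₁ + p₂ + q := by omega
      rw [e4] at hD
      have final := (((hA.sub hB).sub hC).add hD).mono
      have e : p₁ + p₂ + 1 + q = p₁ + p₂ + q + 1 := by omega
      rw [key, e]; exact final

lemma tmul (t : G →ₗ[k] G →ₗ[k] G)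
    (ht1 : ∀ x y z : G, t x ⁅y, z⁆ = ⁅t x y, z⁆ + ⁅y, t x z⁆)
    (ht2 : ∀ x y z : G, t (⁅x, y⁆ + t x y - t y x) z = t x (t y z) - t y (t x z))
    (hs : ∀ a ∈ s, ∀ b ∈ s, t a b ∈ s) :
    ∀ (p : ℕ) (x : G), PLFil k s p x →
      ∀ (q : ℕ) (y : G), PLFil k s q y → PLFil k s (p + q) (t x y) := by
  intro p
  induction p using Nat.strong_induction_on with
  | _ p OIH =>
      intro x hx q y hy
      exact tmul_aux t ht1 ht2 hs hx (fun m hm x' hx' q' y' hy' => OIH m hm x' hx' q' y' hy') q y hy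

lemma toSAC_aux (t : G →ₗ[k] G →ₗ[k] G)
    (ht1 : ∀ x y z : G, t x ⁅y, z⁆ = ⁅t x y, z⁆ + ⁅y, t x z⁆)
    (ht2 : ∀ x y z : G, t (⁅x, y⁆ + t x y - t y x) z = t x (t y z) - t y (t x z))
    (hs : ∀ a ∈ s, ∀ b ∈ s, t a b ∈ s) :
    ∀ {n : ℕ} {x : G}, PLFil k s n x →
      (∀ m, m < n → ∀ z : G, PLFil k s m z → PLSAC s t z) → PLSAC s t x := by
  intro n x hx
  induction hx with
  | base h => exact fun _ => .base h
  | zero n => exact fun _ => .zero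
  | add h1 h2 ih1 ih2 => exact fun OIH => (ih1 OIH).add (ih2 OIH)
  | smul c h ih => exact fun OIH => (ih OIH).smul c
  | @mono n x h ih => exact fun OIH => ih (fun m hm => OIH m (by omega))
  | @lie p q x y h1 h2 ih1 ih2 =>
      intro OIH
      have sx := OIH p (by omega) _ h1
      have sy := OIH q (by omega) _ h2
      have st1 := OIH (p + q) (by omega) _ (tmul t ht1 ht2 hs p x h1 q y h2)
      have st2' := tmul t ht1 ht2 hs q y h2 p x h1
      rw [Nat.add_comm q p] at st2'
      have st2 := OIH (p + q) (by omega) _ st2'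
      have hcomb := sx.sb sy
      have hst1neg : PLSAC s t (-(t x y)) := by
        have := st1.smul (-1 : k); rwa [neg_one_smul] at this
      have key : ⁅x, y⁆ = (t x y - t y x + ⁅x, y⁆) + -(t x y) + t y x := by abel
      rw [key]
      exact (hcomb.add hst1neg).add st2

lemma toSAC (t : G →ₗ[k] G →ₗ[k] G)
    (ht1 : ∀ x y z : G, t x ⁅y, z⁆ = ⁅t x y, z⁆ + ⁅y, t x z⁆)
    (ht2 : ∀ x y z : G, t (⁅x, y⁆ + t x y - t y x) z = t x (t y z) - t y (t x z))
    (hs : ∀ a ∈ s, ∀ b ∈ s, t a b ∈ s) :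
    ∀ (n : ℕ) (x : G), PLFil k s n x → PLSAC s t x := by
  intro n
  induction n using Nat.strong_induction_on with
  | _ n OIH =>
      intro x h
      exact toSAC_aux t ht1 ht2 hs h (fun m hm z hz => OIH m hm z hz)

end PLFil

end PLAux


/-!
STATEMENT 15: the action post-Lie-Rinehart algebra `PostLR(V) = (R, R ⊗ Lie(V), [·,·],
ρ̄_V, ⊵_V)` built from the free post-Lie algebra `Lie(V)` on a magma algebra `(V, ↷)`
and a lift `ρ_V` of `f_V : V → Der_k(R)` is the free post-Lie-Rinehart algebra on
`(V, ↷, f_V)`.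
-/

theorem stmt15 {k R : Type*} [Field k] [CharZero k] [CommRing R] [Algebra k R]
    {V : Type v} [AddCommGroup V] [Module k V]
    -- the magma algebra product `↷` on `V`
    (m : V →ₗ[k] V →ₗ[k] V)
    -- the free post-Lie algebra `Lie(V)` on `(V, ↷)`, with canonical embedding `i_V`
    {G : Type v} [LieRing G] [LieAlgebra k G]
    (iV : V →ₗ[k] G)
    (tG : G →ₗ[k] G →ₗ[k] G)
    (htG1 : ∀ x y z : G, tG x ⁅y, z⁆ = ⁅tG x y, z⁆ + ⁅y, tG x z⁆)
    (htG2 : ∀ x y z : G,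
      tG (⁅x, y⁆ + tG x y - tG y x) z = tG x (tG y z) - tG y (tG x z))
    (hiV : ∀ u v : V, tG (iV u) (iV v) = iV (m u v))
    -- the universal property of the free post-Lie algebra
    (hfree : ∀ (g' : Type v) [LieRing g'] [LieAlgebra k g']
      (t' : g' →ₗ[k] g' →ₗ[k] g'),
      (∀ x y z : g', t' x ⁅y, z⁆ = ⁅t' x y, z⁆ + ⁅y, t' x z⁆) →
      (∀ x y z : g',
        t' (⁅x, y⁆ + t' x y - t' y x) z = t' x (t' y z) - t' y (t' x z)) →
      ∀ φ : V →ₗ[k] g', (∀ u v : V, φ (m u v) = t' (φ u) (φ v)) →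
      ∃! ψ : G →ₗ[k] g',
        (∀ x y : G, ψ ⁅x, y⁆ = ⁅ψ x, ψ y⁆)
        ∧ (∀ x y : G, ψ (tG x y) = t' (ψ x) (ψ y))
        ∧ (∀ u : V, ψ (iV u) = φ u))
    -- the linear map `f_V : V → Der_k(R)` and its lift `ρ_V` to `Lie(V)_▷`
    (fV : V →ₗ[k] Derivation k R R)
    (ρV : G →ₗ[k] Derivation k R R)
    (hρV : ∀ x y : G, ρV (tG x y - tG y x + ⁅x, y⁆) = ⁅ρV x, ρV y⁆)
    (hρViV : ∀ u : V, ρV (iV u) = fV u)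
    -- the action post-Lie-Rinehart algebra `PostLR(V)` on `R ⊗ Lie(V)`
    (bL : (R ⊗[k] G) →ₗ[R] (R ⊗[k] G) →ₗ[R] (R ⊗[k] G))
    (hbL : ∀ (f₁ f₂ : R) (x₁ x₂ : G),
      bL (f₁ ⊗ₜ[k] x₁) (f₂ ⊗ₜ[k] x₂) = (f₁ * f₂) ⊗ₜ[k] ⁅x₁, x₂⁆)
    (tL : (R ⊗[k] G) →ₗ[k] (R ⊗[k] G) →ₗ[k] (R ⊗[k] G))
    (htL : ∀ (f₁ f₂ : R) (x₁ x₂ : G),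
      tL (f₁ ⊗ₜ[k] x₁) (f₂ ⊗ₜ[k] x₂)
        = (f₁ * ρV x₁ f₂) ⊗ₜ[k] x₂ + (f₁ * f₂) ⊗ₜ[k] tG x₁ x₂)
    (ρL : (R ⊗[k] G) →ₗ[R] Derivation k R R)
    (hρL : ∀ (f : R) (x : G), ρL (f ⊗ₜ[k] x) = f • ρV x) :
    -- the universal property of the free post-Lie-Rinehart algebra: for every
    -- post-Lie-Rinehart algebra `(R, L, [·,·]_L, ρ, ▷)` and every linear map
    -- `φ : V → L` with `φ(u ↷ v) = φ(u) ▷ φ(v)` and `ρ ∘ φ = f_V`, there is a unique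
    -- post-Lie-Rinehart algebra homomorphism `ψ : R ⊗ Lie(V) → L` with
    -- `ψ(1 ⊗ i_V(v)) = φ(v)`
    ∀ (L : Type v) [AddCommGroup L] [Module k L] [Module R L] [IsScalarTower k R L],
    ∀ (bLa : L →ₗ[R] L →ₗ[R] L) (tLa : L →ₗ[k] L →ₗ[k] L)
      (ρa : L →ₗ[R] Derivation k R R),
      (∀ x : L, bLa x x = 0) →
      (∀ x y z : L, bLa x (bLa y z) + bLa y (bLa z x) + bLa z (bLa x y) = 0) →
      (∀ x y z : L, tLa x (bLa y z) = bLa (tLa x y) z + bLa y (tLa x z)) →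
      (∀ x y z : L,
        tLa (bLa x y + tLa x y - tLa y x) z = tLa x (tLa y z) - tLa y (tLa x z)) →
      (∀ x y : L, ρa (tLa x y - tLa y x + bLa x y) = ⁅ρa x, ρa y⁆) →
      (∀ (f : R) (x y : L), tLa (f • x) y = f • tLa x y) →
      (∀ (f : R) (x y : L), tLa x (f • y) = f • tLa x y + ρa x f • y) →
      ∀ φ : V →ₗ[k] L,
        (∀ u v : V, φ (m u v) = tLa (φ u) (φ v)) →
        (∀ u : V, ρa (φ u) = fV u) →
        ∃! ψ : (R ⊗[k] G) →ₗ[R] L,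
          (∀ x y : R ⊗[k] G, ψ (bL x y) = bLa (ψ x) (ψ y))
          ∧ (∀ x y : R ⊗[k] G, ψ (tL x y) = tLa (ψ x) (ψ y))
          ∧ (∀ x : R ⊗[k] G, ρa (ψ x) = ρL x)
          ∧ (∀ u : V, ψ ((1 : R) ⊗ₜ[k] iV u) = φ u) := by
  intro L _ _ _ _ bLa tLa ρa halt hjac h3 h4 hanch h6 h7 φ hφm hφρ
  -- antisymmetry of `bLa`
  have anti : ∀ a b : L, bLa a b = - bLa b a := by
    intro a b
    have h0 := halt (a + b)
    simp only [map_add, LinearMap.add_apply, halt, zero_add, add_zero] at h0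
    exact eq_neg_of_add_eq_zero_right h0
  have leib : ∀ x y z : L, bLa x (bLa y z) = bLa (bLa x y) z + bLa y (bLa x z) := by
    intro x y z
    have hj := hjac x y z
    have e1 : bLa y (bLa z x) = - bLa y (bLa x z) := by rw [anti z x, map_neg]
    have e2 : bLa z (bLa x y) = - bLa (bLa x y) z := anti z (bLa x y)
    rw [e1, e2, ← sub_eq_add_neg, ← sub_eq_add_neg, sub_sub, sub_eq_zero] at hj
    rw [hj]; abel
  letI instLR : LieRing L :=
    { bracket := fun x y => bLa x y
      add_lie := fun x y z => by
        show bLa (x + y) z = bLa x z + bLa y z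
        rw [map_add]; rfl
      lie_add := fun x y z => by
        show bLa x (y + z) = bLa x y + bLa x z
        rw [map_add]
      lie_self := halt
      leibniz_lie := fun x y z => leib x y z }
  letI instLA : LieAlgebra k L :=
    { lie_smul := fun c x y => by
        show bLa x (c • y) = c • bLa x y
        rw [← algebraMap_smul R c y, map_smul, algebraMap_smul] }
  have hbr : ∀ a b : L, ⁅a, b⁆ = bLa a b := fun _ _ => rfl
  -- apply freeness to `L`
  have a1 : ∀ x y z : L, tLa x ⁅y, z⁆ = ⁅tLa x y, z⁆ + ⁅y, tLa x z⁆ := h3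
  have a2 : ∀ x y z : L,
      tLa (⁅x, y⁆ + tLa x y - tLa y x) z = tLa x (tLa y z) - tLa y (tLa x z) := h4
  obtain ⟨ψ₀, ⟨hψb, hψt, hψi⟩, hψuniq⟩ := hfree L tLa a1 a2 φ hφm
  -- generation of `G`
  set s : Set G := Set.range iV with hsdef
  have hs : ∀ a ∈ s, ∀ b ∈ s, tG a b ∈ s := by
    rintro a ⟨u, rfl⟩ b ⟨v, rfl⟩
    exact ⟨m u v, (hiV u v).symm⟩
  have htmulG := PLFil.tmul (s := s) tG htG1 htG2 hs
  let D : Submodule k G :=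
    { carrier := {x | ∃ n, PLFil k s n x}
      add_mem' := fun {a b} ha hb => by
        obtain ⟨n, hn⟩ := ha; obtain ⟨n', hn'⟩ := hb
        exact ⟨max n n', (hn.le (le_max_left _ _)).add (hn'.le (le_max_right _ _))⟩
      zero_mem' := ⟨0, .zero 0⟩
      smul_mem' := fun c x hx => by
        obtain ⟨n, hn⟩ := hx; exact ⟨n, hn.smul c⟩ }
  let DL : LieSubalgebra k G :=
    { D with
      lie_mem' := fun {x y} hx hy => by
        obtain ⟨n, hn⟩ := hx; obtain ⟨n', hn'⟩ := hy
        exact ⟨n + n' + 1, hn.lie hn'⟩ }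
  have htmem : ∀ x : G, (∃ n, PLFil k s n x) → ∀ y : G, (∃ n, PLFil k s n y) →
      ∃ n, PLFil k s n (tG x y) := by
    rintro x ⟨p, hp⟩ y ⟨q, hq⟩
    exact ⟨p + q, htmulG p x hp q y hq⟩
  let t' : ↥DL →ₗ[k] ↥DL →ₗ[k] ↥DL :=
    LinearMap.mk₂ k (fun x y => (⟨tG x.1 y.1, htmem _ x.2 _ y.2⟩ : ↥DL))
      (fun x₁ x₂ y => Subtype.ext <| by
        show tG (x₁.1 + x₂.1) y.1 = tG x₁.1 y.1 + tG x₂.1 y.1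
        rw [map_add]; rfl)
      (fun c x y => Subtype.ext <| by
        show tG (c • x.1) y.1 = c • tG x.1 y.1
        rw [map_smul]; rfl)
      (fun x y₁ y₂ => Subtype.ext <| by
        show tG x.1 (y₁.1 + y₂.1) = tG x.1 y₁.1 + tG x.1 y₂.1
        rw [map_add])
      (fun c x y => Subtype.ext <| by
        show tG x.1 (c • y.1) = c • tG x.1 y.1
        rw [map_smul])
  have hco : ∀ a b : ↥DL, ((t' a b : ↥DL) : G) = tG a.1 b.1 := fun _ _ => rfl
  have hcob : ∀ a b : ↥DL, ((⁅a, b⁆ : ↥DL) : G) = ⁅a.1, b.1⁆ := fun _ _ => rfl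
  have hcoadd : ∀ a b : ↥DL, ((a + b : ↥DL) : G) = a.1 + b.1 := fun _ _ => rfl
  have hcosub : ∀ a b : ↥DL, ((a - b : ↥DL) : G) = a.1 - b.1 := fun _ _ => rfl
  have ax1' : ∀ x y z : ↥DL, t' x ⁅y, z⁆ = ⁅t' x y, z⁆ + ⁅y, t' x z⁆ := by
    intro x y z
    apply Subtype.ext
    rw [hco, hcoadd, hcob, hcob, hcob, hco, hco]
    exact htG1 x.1 y.1 z.1
  have ax2' : ∀ x y z : ↥DL,
      t' (⁅x, y⁆ + t' x y - t' y x) z = t' x (t' y z) - t' y (t' x z) := by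
    intro x y z
    apply Subtype.ext
    rw [hco, hcosub, hcoadd, hcob, hco, hco, hcosub, hco, hco, hco, hco]
    exact htG2 x.1 y.1 z.1
  let φ' : V →ₗ[k] ↥DL :=
    { toFun := fun v => ⟨iV v, ⟨0, .base ⟨v, rfl⟩⟩⟩
      map_add' := fun u v => Subtype.ext (map_add iV u v)
      map_smul' := fun c v => Subtype.ext (map_smul iV c v) }
  have hm' : ∀ u v : V, φ' (m u v) = t' (φ' u) (φ' v) := fun u v =>
    Subtype.ext ((hiV u v).symm)
  obtain ⟨ψD, ⟨hDb, hDt, hDi⟩, -⟩ := hfree ↥DL t' ax1' ax2' φ' hm'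
  obtain ⟨ξ, -, hξuniq⟩ := hfree G tG htG1 htG2 iV (fun u v => (hiV u v).symm)
  have hid := hξuniq LinearMap.id ⟨fun x y => rfl, fun x y => rfl, fun u => rfl⟩
  let incl : ↥DL →ₗ[k] G :=
    { toFun := fun x => x.1
      map_add' := fun _ _ => rfl
      map_smul' := fun _ _ => rfl }
  have hcomp := hξuniq (incl ∘ₗ ψD)
    ⟨fun x y => by
        show (ψD ⁅x, y⁆).1 = ⁅(ψD x).1, (ψD y).1⁆
        rw [hDb, LieSubalgebra.coe_bracket],
      fun x y => by
        show (ψD (tG x y)).1 = tG (ψD x).1 (ψD y).1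
        rw [hDt]; rfl,
      fun u => by
        show (ψD (iV u)).1 = iV u
        rw [hDi]; rfl⟩
  have hgen : ∀ x : G, ∃ n, PLFil k s n x := by
    intro x
    have e : (incl ∘ₗ ψD) x = LinearMap.id (R := k) (M := G) x := by
      rw [hcomp, hid]
    have e' : ((ψD x : ↥DL) : G) = x := e
    exact e' ▸ (ψD x).2
  -- the key anchor compatibility
  have keySAC : ∀ x : G, PLSAC s tG x → ρa (ψ₀ x) = ρV x := by
    intro x hx
    induction hx with
    | base h =>
        obtain ⟨u, rfl⟩ := h
        rw [hψi, hφρ, hρViV]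
    | zero => rw [map_zero, map_zero, map_zero]
    | add h1 h2 ih1 ih2 => rw [map_add, map_add, map_add, ih1, ih2]
    | @smul c x h ih =>
        have e1 : ψ₀ (c • x) = c • ψ₀ x := map_smul ψ₀ c x
        have e2 : ρV (c • x) = c • ρV x := map_smul ρV c x
        rw [e1, e2, ← algebraMap_smul R c (ψ₀ x), map_smul, ih, algebraMap_smul]
    | @sb x y h1 h2 ih1 ih2 =>
        have lhs' : ψ₀ (tG x y - tG y x + ⁅x, y⁆)
            = tLa (ψ₀ x) (ψ₀ y) - tLa (ψ₀ y) (ψ₀ x) + bLa (ψ₀ x) (ψ₀ y) := by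
          rw [map_add, map_sub, hψt, hψt, hψb, hbr]
        rw [lhs', hanch, ih1, ih2, ← hρV]
  have key : ∀ x : G, ρa (ψ₀ x) = ρV x := fun x => by
    obtain ⟨n, hn⟩ := hgen x
    exact keySAC x (PLFil.toSAC tG htG1 htG2 hs n x hn)
  -- the lifted morphism
  let ψ : (R ⊗[k] G) →ₗ[R] L := LinearMap.liftBaseChange R ψ₀
  have hψtm : ∀ (f : R) (x : G), ψ (f ⊗ₜ[k] x) = f • ψ₀ x := fun f x =>
    LinearMap.liftBaseChange_tmul R ψ₀ f x
  refine ⟨ψ, ⟨?_, ?_, ?_, ?_⟩, ?_⟩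
  · -- brackets
    intro x y
    induction x using TensorProduct.induction_on with
    | zero => simp
    | tmul f₁ x₁ =>
        induction y using TensorProduct.induction_on with
        | zero => simp
        | tmul f₂ x₂ =>
            rw [hbL, hψtm, hψtm, hψtm, hψb, hbr]
            simp only [map_smul, LinearMap.smul_apply, smul_smul]
            rw [mul_comm]
        | add y₁ y₂ ih1 ih2 => simp only [map_add, ih1, ih2]
    | add x₁ x₂ ih1 ih2 => simp only [map_add, LinearMap.add_apply, ih1, ih2]
  · -- products
    intro x y
    induction x using TensorProduct.induction_on with
    | zero => simp
    | tmul f₁ x₁ =>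
        induction y using TensorProduct.induction_on with
        | zero => simp
        | tmul f₂ x₂ =>
            simp only [htL, map_add, hψtm, hψt, h6, h7, key, smul_add, smul_smul]
            abel
        | add y₁ y₂ ih1 ih2 => simp only [map_add, ih1, ih2]
    | add x₁ x₂ ih1 ih2 => simp only [map_add, LinearMap.add_apply, ih1, ih2]
  · -- anchors
    intro x
    induction x using TensorProduct.induction_on with
    | zero => simp
    | tmul f x => rw [hψtm, map_smul, key, hρL]
    | add x₁ x₂ ih1 ih2 => simp only [map_add, ih1, ih2]
  · -- values on generators
    intro u
    rw [hψtm, hψi, one_smul]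
  · -- uniqueness
    rintro ψ' ⟨p1, p2, p3, p4⟩
    let χ : G →ₗ[k] L := (ψ'.restrictScalars k) ∘ₗ ((TensorProduct.mk k R G) 1)
    have hχdef : ∀ x : G, χ x = ψ' ((1 : R) ⊗ₜ[k] x) := fun x => rfl
    have hχ1 : ∀ x y : G, χ ⁅x, y⁆ = ⁅χ x, χ y⁆ := by
      intro x y
      have e : (1 : R) ⊗ₜ[k] ⁅x, y⁆ = bL ((1 : R) ⊗ₜ[k] x) ((1 : R) ⊗ₜ[k] y) := by
        rw [hbL, one_mul]
      rw [hχdef, e, p1, hbr]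
      rfl
    have hχ2 : ∀ x y : G, χ (tG x y) = tLa (χ x) (χ y) := by
      intro x y
      have e : (1 : R) ⊗ₜ[k] (tG x y) = tL ((1 : R) ⊗ₜ[k] x) ((1 : R) ⊗ₜ[k] y) := by
        rw [htL, Derivation.map_one_eq_zero, mul_zero, TensorProduct.zero_tmul,
          zero_add, one_mul]
      rw [hχdef, e, p2]
      rfl
    have hχ3 : ∀ u : V, χ (iV u) = φ u := fun u => p4 u
    have hχ : χ = ψ₀ := hψuniq χ ⟨hχ1, hχ2, hχ3⟩
    apply LinearMap.ext
    intro z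
    induction z using TensorProduct.induction_on with
    | zero => rw [map_zero, map_zero]
    | tmul f x =>
        have e : f ⊗ₜ[k] x = f • ((1 : R) ⊗ₜ[k] x) := by
          rw [TensorProduct.smul_tmul', smul_eq_mul, mul_one]
        have e1 : ψ' ((1 : R) ⊗ₜ[k] x) = ψ₀ x := by rw [← hχdef, hχ]
        rw [e, map_smul, map_smul, e1, hψtm, one_smul]
    | add z₁ z₂ ih1 ih2 => rw [map_add, map_add, ih1, ih2]
end
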